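/- arXiv:2004.04726 — 5 statements merged into one kernel-verified Lean document; each statement's English description precedes it below -/
import Mathlib

section
/- For the quiver D₂ with vertices 1,…,n (n ≥ 3), arrows 1 → 2 → ⋯ → n−2, n−2 → n−1, and n → n−2, the number of quasi-hereditary structures on kD₂ equals 3·C_{n−1} − C_{n−2}. -/
/-!
STATEMENT 10.  `D₂` is the type `D` quiver with vertices `1, …, n` (`n ≥ 3`), arrows
`1 → 2 → ⋯ → n-2`, `n-2 → n-1` and `n → n-2`.  Its path algebra is the incidence algebra of
the path order on the vertices (encoded below on `Fin n`, 0-based: chain `0 ≤ 1 ≤ ⋯ ≤ n-3`,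
`n-2` above every chain vertex and above `n-1`, and `n-1` below the last chain vertex `n-3`).
Quasi-hereditary structures are equivalence classes of adapted orders, two being equivalent
iff they have the same `Dec` and `Inc` relations.  Then
`|qh.str(kD₂)| = 3·C_{n-1} − C_{n-2}`, stated without natural subtraction as
`|qh.str(kD₂)| + C_{n-2} = 3·C_{n-1}`.
-/

section
variable {V : Type*} (le : V → V → Prop)

/-- Adaptedness of `⊲` with respect to the order `le` (the interval criterion). -/
def AdaptedG (lhd : V → V → Prop) : Prop :=
  ∀ i j : V, le i j → ¬ lhd i j → ¬ lhd j i →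
    ∃ k : V, le i k ∧ le k j ∧ lhd i k ∧ lhd j k

/-- `(x, y) ∈ Dec(⊲)`. -/
def DecRelG (lhd : V → V → Prop) (x y : V) : Prop :=
  le y x ∧ ∀ k : V, le y k → le k x → lhd k y

/-- `(x, y) ∈ Inc(⊲)`. -/
def IncRelG (lhd : V → V → Prop) (x y : V) : Prop :=
  le x y ∧ ∀ k : V, le x k → le k y → lhd k y

/-- Equivalence of adapted orders: equal standard and costandard modules. -/
def QHEquivG (lhd₁ lhd₂ : V → V → Prop) : Prop :=
  (∀ x y, DecRelG le lhd₁ x y ↔ DecRelG le lhd₂ x y) ∧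
  (∀ x y, IncRelG le lhd₁ x y ↔ IncRelG le lhd₂ x y)

end

/-- The path order of the quiver `D₂` on `Fin n` (0-based): the chain `0 ≤ 1 ≤ ⋯ ≤ n-3`,
every chain vertex below `n-2`, and `n-1` below `n-3` and `n-2`. -/
def D2le (n : ℕ) (a b : Fin n) : Prop :=
  a = b ∨ (a.val ≤ b.val ∧ b.val + 3 ≤ n) ∨
    (a.val + 3 ≤ n ∧ b.val = n - 2) ∨
    (a.val = n - 1 ∧ (b.val = n - 3 ∨ b.val = n - 2))

/-!
An adapted order on a chain `0 < ⋯ < k - 1` has a greatest element `ρ`, and its `Dec` and `Inc`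
relations are determined by `ρ` and by those of its restrictions to the chains on either side of
`ρ`. Recursively, the class of the order is that of the post-order of a unique binary tree with `k`
nodes (indexed in in-order), so a chain carries `C_k` classes.

On `D₂`, the relations `Dec` and `Inc` consist of those of the chain `0, …, n - 2` together with
the position of the extra vertex `n - 1`: above both `n - 3` and `n - 2`, below `n - 3`, or
between `n - 3` and `n - 2`, the last one being possible only if `n - 3` lies below `n - 2`. All
these classes are realised by linear orders. The trees with `n - 1` nodes in which `n - 3` does
not lie below `n - 2` are those whose last node has no left subtree, i.e. the trees with `n - 2`
nodes with one node appended; so there are `2 C_{n-1} + (C_{n-1} - C_{n-2})` classes.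
-/

theorem card_quot_eq_card_of_representatives {α β : Type*} {r : α → α → Prop}
    (hr : Equivalence r) (g : β → α) (hsurj : ∀ a, ∃ b, r a (g b))
    (hinj : ∀ b b', r (g b) (g b') → b = b') :
    Nat.card (Quot r) = Nat.card β := by
  refine (Nat.card_eq_of_bijective (fun b => Quot.mk r (g b))
    ⟨fun b b' h => hinj b b' ?_, ?_⟩).symm
  · exact hr.eqvGen_iff.mp (Quot.eqvGen_exact h)
  · rintro ⟨a⟩
    obtain ⟨b, hb⟩ := hsurj a
    exact ⟨b, Quot.sound (hr.symm hb)⟩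

theorem qhEquivG_equivalence {V : Type*} (le : V → V → Prop) : Equivalence (QHEquivG le) where
  refl _ := ⟨fun _ _ => Iff.rfl, fun _ _ => Iff.rfl⟩
  symm h := ⟨fun x y => (h.1 x y).symm, fun x y => (h.2 x y).symm⟩
  trans h h' := ⟨fun x y => (h.1 x y).trans (h'.1 x y), fun x y => (h.2 x y).trans (h'.2 x y)⟩

theorem adaptedG_of_total {V : Type*} {le lhd : V → V → Prop} (h : ∀ a b, lhd a b ∨ lhd b a) :
    AdaptedG le lhd :=
  fun a b _ hab hba => ((h a b).resolve_left hab |> hba).elim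

/-- The path order of the linearly oriented quiver of type `A` with vertices `0, …, k - 1`. -/
def chainLe (k a b : ℕ) : Prop := a ≤ b ∧ b < k

def IsChainRoot (r : ℕ → ℕ → Prop) (k ρ : ℕ) : Prop :=
  ρ < k ∧ ∀ x < k, r x ρ ∧ (r ρ x → x = ρ)

section Chain

variable {r r' r₁ r₂ r₁' r₂' : ℕ → ℕ → Prop} {k k' p ρ : ℕ}

theorem decRelG_chainLe_window (hk : p + k' ≤ k)
    (hr : ∀ a b, a < k' → b < k' → (r' a b ↔ r (a + p) (b + p))) (x y : ℕ) :
    DecRelG (chainLe k') r' x y ↔ x < k' ∧ DecRelG (chainLe k) r (x + p) (y + p) := by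
  simp only [DecRelG, chainLe]
  constructor
  · rintro ⟨⟨hyx, hx⟩, h⟩
    refine ⟨hx, ⟨by omega, by omega⟩, fun z hz hz' => ?_⟩
    obtain ⟨z, rfl⟩ : ∃ z', z = z' + p := ⟨z - p, by omega⟩
    exact (hr z y (by omega) (by omega)).1 (h z ⟨by omega, by omega⟩ ⟨by omega, hx⟩)
  · rintro ⟨hx, ⟨hyx, -⟩, h⟩
    exact ⟨⟨by omega, hx⟩, fun z hz hz' =>
      (hr z y (by omega) (by omega)).2 (h _ ⟨by omega, by omega⟩ ⟨by omega, by omega⟩)⟩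

theorem incRelG_chainLe_window (hk : p + k' ≤ k)
    (hr : ∀ a b, a < k' → b < k' → (r' a b ↔ r (a + p) (b + p))) (x y : ℕ) :
    IncRelG (chainLe k') r' x y ↔ y < k' ∧ IncRelG (chainLe k) r (x + p) (y + p) := by
  simp only [IncRelG, chainLe]
  constructor
  · rintro ⟨⟨hxy, hy⟩, h⟩
    refine ⟨hy, ⟨by omega, by omega⟩, fun z hz hz' => ?_⟩
    obtain ⟨z, rfl⟩ : ∃ z', z = z' + p := ⟨z - p, by omega⟩
    exact (hr z y (by omega) (by omega)).1 (h z ⟨by omega, by omega⟩ ⟨by omega, hy⟩)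
  · rintro ⟨hy, ⟨hxy, -⟩, h⟩
    exact ⟨⟨by omega, hy⟩, fun z hz hz' =>
      (hr z y (by omega) (by omega)).2 (h _ ⟨by omega, by omega⟩ ⟨by omega, by omega⟩)⟩

theorem decRelG_chainLe_of_le (hk : k' ≤ k) {x : ℕ} (hx : x < k') (y : ℕ) :
    DecRelG (chainLe k') r x y ↔ DecRelG (chainLe k) r x y := by
  rw [decRelG_chainLe_window (r := r) (r' := r) (p := 0) (by simpa using hk)
    (fun _ _ _ _ => Iff.rfl) x y]
  exact and_iff_right hx

theorem incRelG_chainLe_of_le (hk : k' ≤ k) (x : ℕ) {y : ℕ} (hy : y < k') :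
    IncRelG (chainLe k') r x y ↔ IncRelG (chainLe k) r x y := by
  rw [incRelG_chainLe_window (r := r) (r' := r) (p := 0) (by simpa using hk)
    (fun _ _ _ _ => Iff.rfl) x y]
  exact and_iff_right hy

theorem decRelG_chainLe_sub (hp : p ≤ k) (x y : ℕ) :
    DecRelG (chainLe (k - p)) (fun a b => r (a + p) (b + p)) x y ↔
      DecRelG (chainLe k) r (x + p) (y + p) := by
  rw [decRelG_chainLe_window (r := r) (k := k) (k' := k - p) (p := p) (by omega)
    (fun _ _ _ _ => Iff.rfl)]
  exact and_iff_right_of_imp fun h => by have := h.1.2; omega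

theorem incRelG_chainLe_sub (hp : p ≤ k) (x y : ℕ) :
    IncRelG (chainLe (k - p)) (fun a b => r (a + p) (b + p)) x y ↔
      IncRelG (chainLe k) r (x + p) (y + p) := by
  rw [incRelG_chainLe_window (r := r) (k := k) (k' := k - p) (p := p) (by omega)
    (fun _ _ _ _ => Iff.rfl)]
  exact and_iff_right_of_imp fun h => by have := h.1.2; omega

theorem incRelG_chainLe_succ [Std.Refl r] {x : ℕ} (hx : x + 1 < k) :
    IncRelG (chainLe k) r x (x + 1) ↔ r x (x + 1) := by
  refine ⟨fun h => h.2 x ⟨le_rfl, by omega⟩ ⟨by omega, hx⟩,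
    fun h => ⟨⟨by omega, hx⟩, fun z hxz hz => ?_⟩⟩
  obtain rfl | rfl : z = x ∨ z = x + 1 := by obtain ⟨_, _⟩ := hxz; obtain ⟨_, _⟩ := hz; omega
  exacts [h, refl_of r _]

theorem QHEquivG.chainLe_window (h : QHEquivG (chainLe k) r₁ r₂) (hk : p + k' ≤ k)
    (h₁ : ∀ a b, a < k' → b < k' → (r₁' a b ↔ r₁ (a + p) (b + p)))
    (h₂ : ∀ a b, a < k' → b < k' → (r₂' a b ↔ r₂ (a + p) (b + p))) :
    QHEquivG (chainLe k') r₁' r₂' :=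
  ⟨fun x y => by
    rw [decRelG_chainLe_window hk h₁, decRelG_chainLe_window hk h₂, h.1],
   fun x y => by
    rw [incRelG_chainLe_window hk h₁, incRelG_chainLe_window hk h₂, h.2]⟩

theorem qhEquivG_chainLe_of_iff (h : ∀ a b, a < k → b < k → (r₁ a b ↔ r₂ a b)) :
    QHEquivG (chainLe k) r₁ r₂ :=
  ((qhEquivG_equivalence _).refl r₂).chainLe_window (p := 0) le_rfl h
    (fun _ _ _ _ => Iff.rfl)

theorem AdaptedG.chainLe_window (had : AdaptedG (chainLe k) r) (hk : p + k' ≤ k) :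
    AdaptedG (chainLe k') (fun a b => r (a + p) (b + p)) := by
  rintro a b ⟨hab, hb⟩ h₁ h₂
  obtain ⟨w, ⟨haw, -⟩, ⟨hwb, -⟩, haw', hbw'⟩ :=
    had (a + p) (b + p) ⟨by omega, by omega⟩ h₁ h₂
  obtain ⟨w, rfl⟩ : ∃ w', w = w' + p := ⟨w - p, by omega⟩
  exact ⟨w, ⟨by omega, by omega⟩, ⟨by omega, hb⟩, haw', hbw'⟩

theorem isPartialOrder_add_right (hpo : IsPartialOrder ℕ r) (p : ℕ) :
    IsPartialOrder ℕ (fun a b => r (a + p) (b + p)) where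
  refl a := refl_of r (a + p)
  trans _ _ _ := trans_of r
  antisymm _ _ hab hba := Nat.add_right_cancel (antisymm hab hba)

theorem IsChainRoot.decRelG_root (h : IsChainRoot r k ρ) (x : ℕ) :
    DecRelG (chainLe k) r x ρ ↔ ρ ≤ x ∧ x < k :=
  ⟨fun hd => hd.1, fun hx => ⟨hx, fun z _ hz => (h.2 z (hz.1.trans_lt hz.2)).1⟩⟩

theorem IsChainRoot.not_decRelG (h : IsChainRoot r k ρ) {x y : ℕ} (hy : y < ρ) (hx : ρ ≤ x) :
    ¬ DecRelG (chainLe k) r x y := fun hd =>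
  hy.ne ((h.2 y (hy.trans h.1)).2 (hd.2 ρ ⟨hy.le, h.1⟩ ⟨hx, hd.1.2⟩))

theorem IsChainRoot.incRelG_root (h : IsChainRoot r k ρ) (x : ℕ) :
    IncRelG (chainLe k) r x ρ ↔ x ≤ ρ :=
  ⟨fun hi => hi.1.1, fun hx => ⟨⟨hx, h.1⟩, fun z _ hz => (h.2 z (hz.1.trans_lt h.1)).1⟩⟩

theorem IsChainRoot.not_incRelG (h : IsChainRoot r k ρ) {x y : ℕ} (hx : x ≤ ρ) (hy : ρ < y) :
    ¬ IncRelG (chainLe k) r x y := fun hi =>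
  hy.ne' ((h.2 y hi.1.2).2 (hi.2 ρ ⟨hx, by have := hi.1.2; omega⟩ ⟨hy.le, hi.1.2⟩))

theorem decRelG_congr_of_isChainRoot (h₁ : IsChainRoot r₁ k ρ) (h₂ : IsChainRoot r₂ k ρ)
    (hl : ∀ x y, DecRelG (chainLe ρ) r₁ x y ↔ DecRelG (chainLe ρ) r₂ x y)
    (hr : ∀ x y, DecRelG (chainLe (k - (ρ + 1))) (fun a b => r₁ (a + (ρ + 1)) (b + (ρ + 1))) x y ↔
      DecRelG (chainLe (k - (ρ + 1))) (fun a b => r₂ (a + (ρ + 1)) (b + (ρ + 1))) x y)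
    (x y : ℕ) : DecRelG (chainLe k) r₁ x y ↔ DecRelG (chainLe k) r₂ x y := by
  by_cases hyx : chainLe k y x
  swap
  · exact iff_of_false (fun h => hyx h.1) (fun h => hyx h.1)
  obtain ⟨hyx, hx⟩ := hyx
  rcases lt_trichotomy y ρ with hy | rfl | hy
  · by_cases hxρ : x < ρ
    · rw [← decRelG_chainLe_of_le h₁.1.le hxρ, ← decRelG_chainLe_of_le h₁.1.le hxρ]
      exact hl x y
    · exact iff_of_false (h₁.not_decRelG hy (not_lt.1 hxρ)) (h₂.not_decRelG hy (not_lt.1 hxρ))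
  · rw [h₁.decRelG_root, h₂.decRelG_root]
  · obtain ⟨x, rfl⟩ : ∃ x', x = x' + (ρ + 1) := ⟨x - (ρ + 1), by omega⟩
    obtain ⟨y, rfl⟩ : ∃ y', y = y' + (ρ + 1) := ⟨y - (ρ + 1), by omega⟩
    rw [← decRelG_chainLe_sub h₁.1, ← decRelG_chainLe_sub h₁.1]
    exact hr x y

theorem incRelG_congr_of_isChainRoot (h₁ : IsChainRoot r₁ k ρ) (h₂ : IsChainRoot r₂ k ρ)
    (hl : ∀ x y, IncRelG (chainLe ρ) r₁ x y ↔ IncRelG (chainLe ρ) r₂ x y)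
    (hr : ∀ x y, IncRelG (chainLe (k - (ρ + 1))) (fun a b => r₁ (a + (ρ + 1)) (b + (ρ + 1))) x y ↔
      IncRelG (chainLe (k - (ρ + 1))) (fun a b => r₂ (a + (ρ + 1)) (b + (ρ + 1))) x y)
    (x y : ℕ) : IncRelG (chainLe k) r₁ x y ↔ IncRelG (chainLe k) r₂ x y := by
  by_cases hxy : chainLe k x y
  swap
  · exact iff_of_false (fun h => hxy h.1) (fun h => hxy h.1)
  obtain ⟨hxy, hy⟩ := hxy
  rcases lt_trichotomy y ρ with hy | rfl | hy
  · rw [← incRelG_chainLe_of_le h₁.1.le x hy, ← incRelG_chainLe_of_le h₁.1.le x hy]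
    exact hl x y
  · rw [h₁.incRelG_root, h₂.incRelG_root]
  · by_cases hxρ : ρ < x
    · obtain ⟨x, rfl⟩ : ∃ x', x = x' + (ρ + 1) := ⟨x - (ρ + 1), by omega⟩
      obtain ⟨y, rfl⟩ : ∃ y', y = y' + (ρ + 1) := ⟨y - (ρ + 1), by omega⟩
      rw [← incRelG_chainLe_sub h₁.1, ← incRelG_chainLe_sub h₁.1]
      exact hr x y
    · exact iff_of_false (h₁.not_incRelG (not_lt.1 hxρ) hy) (h₂.not_incRelG (not_lt.1 hxρ) hy)

theorem qhEquivG_chainLe_of_isChainRoot (h₁ : IsChainRoot r₁ k ρ) (h₂ : IsChainRoot r₂ k ρ)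
    (hl : QHEquivG (chainLe ρ) r₁ r₂)
    (hr : QHEquivG (chainLe (k - (ρ + 1))) (fun a b => r₁ (a + (ρ + 1)) (b + (ρ + 1)))
      (fun a b => r₂ (a + (ρ + 1)) (b + (ρ + 1)))) :
    QHEquivG (chainLe k) r₁ r₂ :=
  ⟨decRelG_congr_of_isChainRoot h₁ h₂ hl.1 hr.1, incRelG_congr_of_isChainRoot h₁ h₂ hl.2 hr.2⟩

theorem QHEquivG.isChainRoot_unique {ρ₁ ρ₂ : ℕ} (h : QHEquivG (chainLe k) r₁ r₂)
    (h₁ : IsChainRoot r₁ k ρ₁) (h₂ : IsChainRoot r₂ k ρ₂) : ρ₁ = ρ₂ := by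
  have := h₁.1
  have := h₂.1
  rcases lt_trichotomy ρ₁ ρ₂ with hlt | heq | hlt
  · exact absurd ((h.1 (k - 1) ρ₁).1 ((h₁.decRelG_root _).2 ⟨by omega, by omega⟩))
      (h₂.not_decRelG hlt (by omega))
  · exact heq
  · exact absurd ((h.1 (k - 1) ρ₂).2 ((h₂.decRelG_root _).2 ⟨by omega, by omega⟩))
      (h₁.not_decRelG hlt (by omega))

open Finset in
theorem exists_isChainRoot (hpo : IsPartialOrder ℕ r) (had : AdaptedG (chainLe k) r)
    (hk : 0 < k) : ∃ ρ, IsChainRoot r k ρ := by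
  classical
  obtain ⟨ρ, hρ, hmax⟩ := (Finset.range k).exists_max_image
    (fun x => #{z ∈ Finset.range k | r z x}) ⟨0, Finset.mem_range.2 hk⟩
  rw [Finset.mem_range] at hρ
  have maximal : ∀ w < k, r ρ w → w = ρ := by
    intro w hw hρw
    by_contra hne
    have hsub : {z ∈ Finset.range k | r z ρ} ⊂ {z ∈ Finset.range k | r z w} := by
      refine (Finset.ssubset_iff_of_subset fun z => ?_).2 ⟨w, ?_, ?_⟩
      · simp only [Finset.mem_filter]
        exact fun ⟨hz, h⟩ => ⟨hz, trans_of r h hρw⟩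
      · simp [hw, refl_of r w]
      · simp only [Finset.mem_filter, not_and]
        exact fun _ hwρ => hne (antisymm hwρ hρw)
    exact (Finset.card_lt_card hsub).not_ge (hmax w (Finset.mem_range.2 hw))
  refine ⟨ρ, hρ, fun x hx => ⟨?_, maximal x hx⟩⟩
  by_contra hxρ
  have hρx : ¬ r ρ x := fun h => hxρ (maximal x hx h ▸ refl_of r ρ)
  obtain ⟨w, hw, hxw, hρw⟩ : ∃ w < k, r x w ∧ r ρ w := by
    rcases le_total x ρ with h | h
    · obtain ⟨w, -, ⟨hwρ, -⟩, hxw, hρw⟩ := had x ρ ⟨h, hρ⟩ hxρ hρx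
      exact ⟨w, hwρ.trans_lt hρ, hxw, hρw⟩
    · obtain ⟨w, -, ⟨hwx, -⟩, hρw, hxw⟩ := had ρ x ⟨h, hx⟩ hρx hxρ
      exact ⟨w, hwx.trans_lt hx, hxw, hρw⟩
  exact hxρ (maximal w hw hρw ▸ hxw)

end Chain

namespace BinaryTree

/-- `postRank T i` is the post-order index of the node of `T` whose in-order index is `i`. -/
def postRank : BinaryTree Unit → ℕ → ℕ
  | nil, _ => 0
  | node _ l r, i =>
    if i < l.numNodes then postRank l i
    else if i = l.numNodes then l.numNodes + r.numNodes
    else l.numNodes + postRank r (i - (l.numNodes + 1))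

variable {a : Unit} {l r T : BinaryTree Unit} {i : ℕ}

theorem postRank_node_left (h : i < l.numNodes) : postRank (node a l r) i = postRank l i := by
  rw [postRank, if_pos h]

theorem postRank_node_root : postRank (node a l r) l.numNodes = l.numNodes + r.numNodes := by
  rw [postRank, if_neg (lt_irrefl _), if_pos rfl]

theorem postRank_node_right (i : ℕ) :
    postRank (node a l r) (i + (l.numNodes + 1)) = l.numNodes + postRank r i := by
  rw [postRank, if_neg (by omega), if_neg (by omega), Nat.add_sub_cancel]

theorem postRank_lt : ∀ {T : BinaryTree Unit} {i : ℕ}, i < T.numNodes → postRank T i < T.numNodes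
  | nil, _, h => absurd h (Nat.not_lt_zero _)
  | node _ l r, i, h => by
    rw [numNodes] at h ⊢
    have := @postRank_lt l i
    have := @postRank_lt r (i - (l.numNodes + 1))
    unfold postRank
    split_ifs <;> omega

theorem postRank_injOn : ∀ {T : BinaryTree Unit} {i j : ℕ}, i < T.numNodes → j < T.numNodes →
    postRank T i = postRank T j → i = j
  | nil, _, _, h, _, _ => absurd h (Nat.not_lt_zero _)
  | node _ l r, i, j, hi, hj, h => by
    rw [numNodes] at hi hj
    have := @postRank_lt l i
    have := @postRank_lt l j
    have := @postRank_lt r (i - (l.numNodes + 1))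
    have := @postRank_lt r (j - (l.numNodes + 1))
    have := @postRank_injOn l i j
    have := @postRank_injOn r (i - (l.numNodes + 1)) (j - (l.numNodes + 1))
    unfold postRank at h
    split_ifs at h <;> omega

def postLe (T : BinaryTree Unit) (a b : ℕ) : Prop := postRank T a ≤ postRank T b

instance (T : BinaryTree Unit) : DecidableRel (postLe T) := fun a b =>
  inferInstanceAs (Decidable (postRank T a ≤ postRank T b))

instance (T : BinaryTree Unit) : Std.Refl (postLe T) := ⟨fun a => le_refl (postRank T a)⟩

theorem isChainRoot_postLe : IsChainRoot (postLe (node a l r)) (node a l r).numNodes l.numNodes :=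
  ⟨by simp, fun x hx => ⟨Nat.le_of_lt_succ (by simpa [postRank_node_root] using postRank_lt hx),
    fun h => postRank_injOn hx (by simp) (le_antisymm
      (Nat.le_of_lt_succ (by simpa [postRank_node_root] using postRank_lt hx)) h)⟩⟩

theorem postLe_node_left {x y : ℕ} (hx : x < l.numNodes) (hy : y < l.numNodes) :
    postLe l x y ↔ postLe (node a l r) x y := by
  rw [postLe, postLe, postRank_node_left hx, postRank_node_left hy]

theorem postLe_node_right (x y : ℕ) :
    postLe r x y ↔ postLe (node a l r) (x + (l.numNodes + 1)) (y + (l.numNodes + 1)) := by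
  rw [postLe, postLe, postRank_node_right, postRank_node_right, Nat.add_le_add_iff_left]


def addLast : BinaryTree Unit → BinaryTree Unit
  | nil => node () nil nil
  | node a l r => node a l (addLast r)

theorem numNodes_addLast : ∀ T : BinaryTree Unit, (addLast T).numNodes = T.numNodes + 1
  | nil => rfl
  | node _ l r => by simp [addLast, numNodes_addLast r]; omega

theorem addLast_injective : Function.Injective addLast
  | nil, nil, _ => rfl
  | nil, node _ _ r, h | node _ _ r, nil, h => by
    have := congrArg numNodes h
    simp [addLast, numNodes_addLast] at this
  | node () l r, node () l' r', h => by
    simp only [addLast, node.injEq, true_and] at h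
    rw [h.1, addLast_injective h.2]

theorem postRank_addLast : ∀ {T : BinaryTree Unit} {j : ℕ}, T.numNodes = j + 1 →
    postRank (addLast T) (j + 1) < postRank (addLast T) j
  | nil, _, h => by simp at h
  | node _ l nil, j, h => by
    simp only [numNodes, add_zero, add_left_inj] at h
    subst h
    simp [addLast, postRank]
  | node _ l (node b l' r'), j, h => by
    set r := node b l' r'
    have hr : 0 < r.numNodes := by simp [r]
    simp only [numNodes] at h
    obtain ⟨j, rfl⟩ : ∃ j', j = j' + (l.numNodes + 1) := ⟨j - (l.numNodes + 1), by omega⟩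
    have := postRank_addLast (T := r) (j := j) (by simp only [r, numNodes] at h ⊢; omega)
    simp only [addLast]
    rw [show j + (l.numNodes + 1) + 1 = j + 1 + (l.numNodes + 1) by omega,
      postRank_node_right, postRank_node_right]
    omega

theorem exists_eq_addLast : ∀ {T : BinaryTree Unit} {j : ℕ}, T.numNodes = j + 2 →
    postRank T (j + 1) < postRank T j → ∃ T', T = addLast T'
  | nil, _, h, _ => by simp at h
  | node _ l nil, j, h, hlt => by
    simp only [numNodes, add_zero] at h
    have := postRank_lt (T := l) (i := j) (by omega)
    rw [show j + 1 = l.numNodes by omega, postRank_node_root, postRank_node_left (by omega)] at hlt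
    omega
  | node a l (node b l' r'), j, h, hlt => by
    set r := node b l' r'
    have hr : 0 < r.numNodes := by simp [r]
    by_cases h1 : r.numNodes = 1
    · cases l' <;> cases r' <;> simp [r] at h1
      exact ⟨node a l nil, rfl⟩
    · simp only [numNodes] at h
      obtain ⟨j, rfl⟩ : ∃ j', j = j' + (l.numNodes + 1) := ⟨j - (l.numNodes + 1), by omega⟩
      rw [show j + (l.numNodes + 1) + 1 = j + 1 + (l.numNodes + 1) by omega,
        postRank_node_right, postRank_node_right] at hlt
      obtain ⟨r', hr'⟩ := exists_eq_addLast (T := r) (j := j)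
        (by simp only [r, numNodes] at h h1 ⊢; omega) (by omega)
      exact ⟨node a l r', by rw [addLast, ← hr']⟩

open Finset in
/-- The node `j + 1` comes before `j` in post-order exactly when it has no left subtree, that is,
when `T` is obtained from a tree with `j + 1` nodes by `addLast`. -/
theorem card_filter_not_postLe (j : ℕ) :
    #{T ∈ treesOfNumNodesEq (j + 2) | ¬ postLe T j (j + 1)} = catalan (j + 1) := by
  have himage : (treesOfNumNodesEq (j + 1)).image addLast =
      {T ∈ treesOfNumNodesEq (j + 2) | ¬ postLe T j (j + 1)} := by
    ext T
    simp only [mem_filter, mem_image, mem_treesOfNumNodesEq, postLe, not_le]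
    constructor
    · rintro ⟨T', hT', rfl⟩
      exact ⟨by rw [numNodes_addLast, hT'], postRank_addLast hT'⟩
    · rintro ⟨hT, hlt⟩
      obtain ⟨T', rfl⟩ := exists_eq_addLast hT hlt
      exact ⟨T', by rw [numNodes_addLast] at hT; omega, rfl⟩
  rw [← himage, card_image_of_injective _ addLast_injective, treesOfNumNodesEq_card_eq_catalan]

end BinaryTree

open BinaryTree

theorem exists_qhEquivG_postLe (k : ℕ) {r : ℕ → ℕ → Prop} (hpo : IsPartialOrder ℕ r)
    (had : AdaptedG (chainLe k) r) :
    ∃ T : BinaryTree Unit, T.numNodes = k ∧ QHEquivG (chainLe k) r (postLe T) := by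
  induction k using Nat.strong_induction_on generalizing r with
  | _ k ih =>
  rcases Nat.eq_zero_or_pos k with rfl | hk
  · exact ⟨nil, rfl, qhEquivG_chainLe_of_iff fun a _ ha => absurd ha (Nat.not_lt_zero a)⟩
  obtain ⟨ρ, hρ⟩ := exists_isChainRoot hpo had hk
  obtain ⟨Tl, rfl, hl⟩ := ih ρ hρ.1 hpo (had.chainLe_window (p := 0) (by simpa using hρ.1.le))
  have := hρ.1
  obtain ⟨Tr, hTr, hr⟩ := ih (k - (Tl.numNodes + 1)) (by omega)
    (isPartialOrder_add_right hpo _) (had.chainLe_window (p := Tl.numNodes + 1) (by omega))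
  have hT : (node () Tl Tr).numNodes = k := by rw [numNodes]; omega
  refine ⟨node () Tl Tr, hT, qhEquivG_chainLe_of_isChainRoot hρ (hT ▸ isChainRoot_postLe) ?_ ?_⟩
  · exact (qhEquivG_equivalence _).trans hl
      (qhEquivG_chainLe_of_iff fun x y hx hy => postLe_node_left hx hy)
  · exact (qhEquivG_equivalence _).trans hr
      (qhEquivG_chainLe_of_iff fun x y _ _ => postLe_node_right x y)

theorem eq_of_qhEquivG_postLe : ∀ {T T' : BinaryTree Unit}, T.numNodes = T'.numNodes →
    QHEquivG (chainLe T.numNodes) (postLe T) (postLe T') → T = T'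
  | nil, nil, _, _ => rfl
  | nil, node _ _ _, h, _ | node _ _ _, nil, h, _ => by simp at h
  | node () l r, node () l' r', hk, h => by
    have hroot : l.numNodes = l'.numNodes :=
      h.isChainRoot_unique isChainRoot_postLe (hk ▸ isChainRoot_postLe)
    have hk' : r.numNodes = r'.numNodes := by simp only [numNodes] at hk; omega
    rw [eq_of_qhEquivG_postLe hroot (h.chainLe_window (p := 0) (by simp; omega)
        (fun x y hx hy => postLe_node_left hx hy)
        (fun x y hx hy => postLe_node_left (hroot ▸ hx) (hroot ▸ hy))),
      eq_of_qhEquivG_postLe hk' (h.chainLe_window (p := l.numNodes + 1) (by simp; omega)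
        (fun x y _ _ => postLe_node_right x y)
        (fun x y _ _ => by rw [hroot]; exact postLe_node_right x y))]

/-- `l` read on `ℕ`; it is made reflexive outside `Fin n` so as to stay a partial order. -/
def toNatRel {n : ℕ} (l : Fin n → Fin n → Prop) (a b : ℕ) : Prop :=
  a = b ∨ ∃ (ha : a < n) (hb : b < n), l ⟨a, ha⟩ ⟨b, hb⟩

section toNatRel

variable {n : ℕ} {l : Fin n → Fin n → Prop}

instance : Std.Refl (toNatRel l) := ⟨fun _ => Or.inl rfl⟩

theorem toNatRel_val [Std.Refl l] (x y : Fin n) : toNatRel l x y ↔ l x y :=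
  ⟨by rintro (h | ⟨_, _, h⟩); exacts [Fin.ext h ▸ refl_of l x, h], fun h => Or.inr ⟨_, _, h⟩⟩

theorem isPartialOrder_toNatRel (hpo : IsPartialOrder (Fin n) l) :
    IsPartialOrder ℕ (toNatRel l) where
  trans _ _ _ := by
    rintro (rfl | ⟨ha, hb, hab⟩) (rfl | ⟨hb', hc, hbc⟩)
    exacts [Or.inl rfl, Or.inr ⟨_, _, hbc⟩, Or.inr ⟨_, _, hab⟩, Or.inr ⟨_, _, trans_of l hab hbc⟩]
  antisymm _ _ := by
    rintro (h | ⟨ha, hb, hab⟩) (h' | ⟨hb', ha', hba⟩)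
    exacts [h, h, h'.symm, congrArg Fin.val (antisymm hab hba)]

end toNatRel

namespace D2

variable {j : ℕ}

/-- With `n = j + 3`, the chain of `D₂` is `0, …, j + 1`; `branch` and `sink` are its last two
vertices, and `source` is the extra vertex, which lies below `branch`. -/
def branch (j : ℕ) : Fin (j + 3) := ⟨j, by omega⟩

def sink (j : ℕ) : Fin (j + 3) := ⟨j + 1, by omega⟩

def source (j : ℕ) : Fin (j + 3) := ⟨j + 2, by omega⟩

@[simp] theorem branch_ne_source : branch j ≠ source j := by simp [branch, source, Fin.ext_iff]

@[simp] theorem sink_ne_source : sink j ≠ source j := by simp [sink, source, Fin.ext_iff]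

@[simp] theorem branch_ne_sink : branch j ≠ sink j := by simp [branch, sink, Fin.ext_iff]

theorem d2le_iff {x y : Fin (j + 3)} :
    D2le (j + 3) x y ↔ chainLe (j + 2) x y ∨ (x = source j ∧ j ≤ y.val) := by
  have := x.isLt
  have := y.isLt
  simp only [D2le, chainLe, source, Fin.ext_iff]
  omega

theorem d2le_source_iff {x : Fin (j + 3)} :
    D2le (j + 3) (source j) x ↔ x = branch j ∨ x = sink j ∨ x = source j := by
  have := x.isLt
  simp only [d2le_iff, chainLe, source, branch, sink, Fin.ext_iff, true_and]
  omega

theorem d2le_iff_chainLe_of_ne_source {x y : Fin (j + 3)} (hx : x ≠ source j) :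
    D2le (j + 3) x y ↔ chainLe (j + 2) x y := by
  simp [d2le_iff, hx]

variable {l l₁ l₂ : Fin (j + 3) → Fin (j + 3) → Prop}

theorem adaptedG_toNatRel [Std.Refl l] (had : AdaptedG (D2le (j + 3)) l) :
    AdaptedG (chainLe (j + 2)) (toNatRel l) := by
  rintro a b ⟨hab, hb⟩ h₁ h₂
  have hne : (⟨a, by omega⟩ : Fin (j + 3)) ≠ source j := fun h => by
    simp [source, Fin.ext_iff] at h; omega
  obtain ⟨w, haw, hwb, haw', hbw'⟩ := had ⟨a, by omega⟩ ⟨b, by omega⟩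
    ((d2le_iff_chainLe_of_ne_source hne).2 ⟨hab, hb⟩)
    (fun h => h₁ (Or.inr ⟨_, _, h⟩)) (fun h => h₂ (Or.inr ⟨_, _, h⟩))
  obtain ⟨haw, hw⟩ := (d2le_iff_chainLe_of_ne_source hne).1 haw
  have hwb := ((d2le_iff_chainLe_of_ne_source (Fin.ne_of_val_ne hw.ne)).1 hwb).1
  exact ⟨w, ⟨haw, hw⟩, ⟨hwb, hb⟩, (toNatRel_val _ _).2 haw', (toNatRel_val _ _).2 hbw'⟩

theorem decRelG_D2le_iff_chain [Std.Refl l] {x y : Fin (j + 3)} (hy : y ≠ source j) :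
    DecRelG (D2le (j + 3)) l x y ↔ DecRelG (chainLe (j + 2)) (toNatRel l) x y := by
  simp only [DecRelG, d2le_iff_chainLe_of_ne_source hy]
  refine and_congr_right fun hyx => ⟨fun h z hyz hzx => ?_, fun h z hyz hzx => ?_⟩
  · exact (toNatRel_val ⟨z, by obtain ⟨_, _⟩ := hzx; omega⟩ y).2
      (h _ hyz ((d2le_iff_chainLe_of_ne_source (Fin.ne_of_val_ne hyz.2.ne)).2 hzx))
  · exact (toNatRel_val z y).1
      (h z hyz ((d2le_iff_chainLe_of_ne_source (Fin.ne_of_val_ne hyz.2.ne)).1 hzx))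

theorem incRelG_D2le_iff_chain [Std.Refl l] {x y : Fin (j + 3)} (hx : x ≠ source j) :
    IncRelG (D2le (j + 3)) l x y ↔ IncRelG (chainLe (j + 2)) (toNatRel l) x y := by
  simp only [IncRelG, d2le_iff_chainLe_of_ne_source hx]
  refine and_congr_right fun hxy => ⟨fun h z hxz hzy => ?_, fun h z hxz hzy => ?_⟩
  · exact (toNatRel_val ⟨z, by obtain ⟨_, _⟩ := hzy; omega⟩ y).2
      (h _ hxz ((d2le_iff_chainLe_of_ne_source (Fin.ne_of_val_ne hxz.2.ne)).2 hzy))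
  · exact (toNatRel_val z y).1
      (h z hxz ((d2le_iff_chainLe_of_ne_source (Fin.ne_of_val_ne hxz.2.ne)).1 hzy))

theorem decRelG_D2le_source [Std.Refl l] (x : Fin (j + 3)) :
    DecRelG (D2le (j + 3)) l x (source j) ↔
      x = source j ∨ (x = branch j ∧ l (branch j) (source j)) ∨
        (x = sink j ∧ l (branch j) (source j) ∧ l (sink j) (source j)) := by
  simp only [DecRelG, d2le_source_iff, or_imp, forall_and, forall_eq]
  by_cases hx : x = branch j ∨ x = sink j ∨ x = source j
  · rcases hx with rfl | rfl | rfl <;> simp [d2le_iff, chainLe, branch, sink, source, refl_of l]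
  · simp only [not_or] at hx
    simp [hx]

theorem incRelG_D2le_source [Std.Refl l] (y : Fin (j + 3)) :
    IncRelG (D2le (j + 3)) l (source j) y ↔
      y = source j ∨ (y = branch j ∧ l (source j) (branch j)) ∨
        (y = sink j ∧ l (source j) (sink j) ∧ l (branch j) (sink j)) := by
  simp only [IncRelG, d2le_source_iff, or_imp, forall_and, forall_eq]
  by_cases hy : y = branch j ∨ y = sink j ∨ y = source j
  · rcases hy with rfl | rfl | rfl <;>
      simp [d2le_iff, chainLe, branch, sink, source, refl_of l, and_comm]
  · simp only [not_or] at hy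
    simp [hy]

open Classical in
/-- Where `source` sits relative to `branch` and `sink`: above both (`0`), below `branch` (`1`),
or above `branch` but not above `sink` (`2`). -/
noncomputable def tag (l : Fin (j + 3) → Fin (j + 3) → Prop) : ℕ :=
  if l (branch j) (source j) then if l (sink j) (source j) then 0 else 2 else 1

theorem tag_le_two : tag l ≤ 2 := by
  unfold tag
  split_ifs <;> omega

theorem tag_ne_one_iff : tag l ≠ 1 ↔ l (branch j) (source j) := by
  unfold tag
  split_ifs <;> simp_all

theorem tag_eq_zero_iff : tag l = 0 ↔ l (branch j) (source j) ∧ l (sink j) (source j) := by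
  unfold tag
  split_ifs <;> simp_all

section Adapted

variable (had : AdaptedG (D2le (j + 3)) l)
include had

theorem source_branch_total : l (source j) (branch j) ∨ l (branch j) (source j) := by
  by_contra! h
  obtain ⟨w, hsw, hwb, hs, hb⟩ := had _ _ (by simp [d2le_iff, chainLe, branch, source]) h.1 h.2
  rcases d2le_source_iff.1 hsw with rfl | rfl | rfl
  · exact h.1 hs
  · simp [d2le_iff, chainLe, branch, sink, source] at hwb
  · exact h.2 hb

theorem source_sink_total :
    l (source j) (sink j) ∨ l (sink j) (source j) ∨ l (source j) (branch j) := by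
  by_contra! h
  obtain ⟨w, hsw, -, hs, ht⟩ := had _ _ (by simp [d2le_iff, chainLe, sink, source]) h.1 h.2.1
  rcases d2le_source_iff.1 hsw with rfl | rfl | rfl
  · exact h.2.2 hs
  · exact h.1 hs
  · exact h.2.1 ht

variable [IsPartialOrder (Fin (j + 3)) l]

theorem source_branch_iff : l (source j) (branch j) ↔ tag l = 1 := by
  rw [← not_iff_not, ← ne_eq, tag_ne_one_iff]
  refine ⟨fun h => (source_branch_total had).resolve_left h, fun hbs hsb => ?_⟩
  exact branch_ne_source (antisymm hbs hsb)

theorem source_sink_iff :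
    l (source j) (sink j) ∧ l (branch j) (sink j) ↔
      (tag l = 1 ∧ l (branch j) (sink j)) ∨ tag l = 2 := by
  constructor
  · rintro ⟨hst, hbt⟩
    by_cases hbs : l (branch j) (source j)
    · have hts : ¬ l (sink j) (source j) := fun hts => sink_ne_source (antisymm hts hst)
      unfold tag
      simp [hbs, hts]
    · exact Or.inl ⟨not_not.1 (mt tag_ne_one_iff.1 hbs), hbt⟩
  · rintro (⟨h1, hbt⟩ | h2)
    · exact ⟨trans_of l ((source_branch_iff had).2 h1) hbt, hbt⟩
    · have hbs : l (branch j) (source j) := tag_ne_one_iff.1 (by omega)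
      have hts : ¬ l (sink j) (source j) := fun hts => by
        have := tag_eq_zero_iff.2 ⟨hbs, hts⟩
        omega
      have hsb : ¬ l (source j) (branch j) := fun hsb => branch_ne_source (antisymm hbs hsb)
      have hst := ((source_sink_total had).resolve_right (not_or.2 ⟨hts, hsb⟩))
      exact ⟨hst, trans_of l hbs hst⟩

end Adapted

theorem decRelG_D2le_iff [Std.Refl l] (x y : Fin (j + 3)) :
    DecRelG (D2le (j + 3)) l x y ↔
      (y ≠ source j ∧ DecRelG (chainLe (j + 2)) (toNatRel l) x y) ∨
        (y = source j ∧
          (x = source j ∨ (x = branch j ∧ tag l ≠ 1) ∨ (x = sink j ∧ tag l = 0))) := by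
  by_cases hy : y = source j
  · subst hy
    simp [decRelG_D2le_source, tag_ne_one_iff, tag_eq_zero_iff]
  · simp [decRelG_D2le_iff_chain hy, hy]

theorem branch_sink_iff [Std.Refl l] :
    l (branch j) (sink j) ↔ IncRelG (chainLe (j + 2)) (toNatRel l) j (j + 1) :=
  (toNatRel_val (branch j) (sink j)).symm.trans (incRelG_chainLe_succ (by omega)).symm

theorem incRelG_D2le_iff [IsPartialOrder (Fin (j + 3)) l] (had : AdaptedG (D2le (j + 3)) l)
    (x y : Fin (j + 3)) :
    IncRelG (D2le (j + 3)) l x y ↔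
      (x ≠ source j ∧ IncRelG (chainLe (j + 2)) (toNatRel l) x y) ∨
        (x = source j ∧ (y = source j ∨ (y = branch j ∧ tag l = 1) ∨
          (y = sink j ∧ ((tag l = 1 ∧ IncRelG (chainLe (j + 2)) (toNatRel l) j (j + 1)) ∨
            tag l = 2)))) := by
  by_cases hx : x = source j
  · subst hx
    rw [incRelG_D2le_source, source_branch_iff had, source_sink_iff had,
      branch_sink_iff (l := l)]
    simp
  · simp [incRelG_D2le_iff_chain hx, hx]

theorem qhEquivG_toNatRel [Std.Refl l₁] [Std.Refl l₂] (h : QHEquivG (D2le (j + 3)) l₁ l₂) :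
    QHEquivG (chainLe (j + 2)) (toNatRel l₁) (toNatRel l₂) := by
  refine ⟨fun x y => ?_, fun x y => ?_⟩
  · by_cases hyx : chainLe (j + 2) y x
    · obtain ⟨_, _⟩ := hyx
      have hy : (⟨y, by omega⟩ : Fin (j + 3)) ≠ source j :=
        Fin.ne_of_val_ne (by simp [source]; omega)
      have := h.1 ⟨x, by omega⟩ ⟨y, by omega⟩
      rwa [decRelG_D2le_iff_chain hy, decRelG_D2le_iff_chain hy] at this
    · exact iff_of_false (fun h => hyx h.1) (fun h => hyx h.1)
  · by_cases hxy : chainLe (j + 2) x y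
    · obtain ⟨_, _⟩ := hxy
      have hx : (⟨x, by omega⟩ : Fin (j + 3)) ≠ source j :=
        Fin.ne_of_val_ne (by simp [source]; omega)
      have := h.2 ⟨x, by omega⟩ ⟨y, by omega⟩
      rwa [incRelG_D2le_iff_chain hx, incRelG_D2le_iff_chain hx] at this
    · exact iff_of_false (fun h => hxy h.1) (fun h => hxy h.1)

theorem tag_eq_of_qhEquivG [Std.Refl l₁] [Std.Refl l₂] (h : QHEquivG (D2le (j + 3)) l₁ l₂) :
    tag l₁ = tag l₂ := by
  have h0 := h.1 (sink j) (source j)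
  have h1 := h.1 (branch j) (source j)
  simp [decRelG_D2le_iff, branch_ne_sink.symm] at h0 h1
  have := tag_le_two (l := l₁)
  have := tag_le_two (l := l₂)
  omega

theorem qhEquivG_D2le_iff [IsPartialOrder (Fin (j + 3)) l₁] [IsPartialOrder (Fin (j + 3)) l₂]
    (had₁ : AdaptedG (D2le (j + 3)) l₁) (had₂ : AdaptedG (D2le (j + 3)) l₂) :
    QHEquivG (D2le (j + 3)) l₁ l₂ ↔
      QHEquivG (chainLe (j + 2)) (toNatRel l₁) (toNatRel l₂) ∧ tag l₁ = tag l₂ := by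
  refine ⟨fun h => ⟨qhEquivG_toNatRel h, tag_eq_of_qhEquivG h⟩, fun ⟨hc, ht⟩ => ⟨fun x y => ?_, fun x y => ?_⟩⟩
  · simp only [decRelG_D2le_iff, hc.1, ht]
  · simp only [incRelG_D2le_iff had₁, incRelG_D2le_iff had₂, hc.2, ht]

/-- A linear order realising the tree `T` and the tag `v`: the chain is ordered by the
post-order of `T`, and `source` is put on top (`v = 0`), at the bottom (`v = 1`), or just above
`branch` (`v = 2`). -/
def canonRank (j : ℕ) (T : BinaryTree Unit) (v : ℕ) (x : Fin (j + 3)) : ℕ :=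
  if x.val < j + 2 then 2 * postRank T x + 1
  else if v = 0 then 2 * j + 4 else if v = 1 then 0 else 2 * postRank T j + 2

def canon (j : ℕ) (T : BinaryTree Unit) (v : ℕ) (x y : Fin (j + 3)) : Prop :=
  canonRank j T v x ≤ canonRank j T v y

variable {T : BinaryTree Unit} {v : ℕ}

theorem canonRank_injective (hT : T.numNodes = j + 2) :
    Function.Injective (canonRank j T v) := by
  intro x y h
  have := x.isLt
  have := y.isLt
  unfold canonRank at h
  split_ifs at h with hx hy hy
  · exact Fin.ext (postRank_injOn (T := T) (by omega) (by omega) (by omega))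
  all_goals omega

theorem isPartialOrder_canon (hT : T.numNodes = j + 2) :
    IsPartialOrder (Fin (j + 3)) (canon j T v) where
  refl _ := le_rfl
  trans _ _ _ := le_trans
  antisymm _ _ h h' := canonRank_injective hT (le_antisymm h h')

theorem adaptedG_canon : AdaptedG (D2le (j + 3)) (canon j T v) :=
  adaptedG_of_total fun _ _ => le_total _ _

theorem qhEquivG_toNatRel_canon (hT : T.numNodes = j + 2) :
    QHEquivG (chainLe (j + 2)) (toNatRel (canon j T v)) (postLe T) := by
  have := isPartialOrder_canon (v := v) hT
  refine qhEquivG_chainLe_of_iff fun a b ha hb => ?_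
  rw [toNatRel_val ⟨a, by omega⟩ ⟨b, by omega⟩, canon, canonRank, canonRank, if_pos ha, if_pos hb]
  simp only [postLe]
  omega

theorem tag_canon (hT : T.numNodes = j + 2) (hv : v ≤ 2) (hβ : v = 2 → postLe T j (j + 1)) :
    tag (canon j T v) = v := by
  have hm := postRank_lt (T := T) (i := j) (by omega)
  have ht := postRank_lt (T := T) (i := j + 1) (by omega)
  have hne : postRank T (j + 1) ≠ postRank T j := fun h => by
    have := postRank_injOn (by omega) (by omega) h
    omega
  unfold tag canon canonRank
  simp only [branch, sink, source]
  rcases (by omega : v = 0 ∨ v = 1 ∨ v = 2) with rfl | rfl | rfl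
  · simp only [show j < j + 2 by omega, show j + 1 < j + 2 by omega, lt_self_iff_false,
      if_true, if_false]
    rw [if_pos (by omega), if_pos (by omega)]
  · simp
  · have := hβ rfl
    simp only [postLe] at this
    simp
    omega

open Finset in
/-- The invariants (tree of the chain, tag) of the classes of adapted orders on `D₂`. -/
def shapes (j : ℕ) : Finset (BinaryTree Unit × ℕ) :=
  treesOfNumNodesEq (j + 2) ×ˢ {0, 1} ∪ {T ∈ treesOfNumNodesEq (j + 2) | postLe T j (j + 1)} ×ˢ {2}

theorem mem_shapes {p : BinaryTree Unit × ℕ} :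
    p ∈ shapes j ↔ p.1.numNodes = j + 2 ∧ p.2 ≤ 2 ∧ (p.2 = 2 → postLe p.1 j (j + 1)) := by
  simp only [shapes, Finset.mem_union, Finset.mem_product, Finset.mem_filter,
    mem_treesOfNumNodesEq, Finset.mem_insert, Finset.mem_singleton]
  by_cases h : postLe p.1 j (j + 1) <;> simp [h] <;> omega

open Finset in
theorem card_shapes (j : ℕ) : #(shapes j) + catalan (j + 1) = 3 * catalan (j + 2) := by
  have hdisj : Disjoint (treesOfNumNodesEq (j + 2) ×ˢ ({0, 1} : Finset ℕ))
      ({T ∈ treesOfNumNodesEq (j + 2) | postLe T j (j + 1)} ×ˢ {2}) :=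
    disjoint_product.2 (Or.inr (by simp))
  have hsplit := card_filter_add_card_filter_not (s := treesOfNumNodesEq (j + 2))
    (fun T => postLe T j (j + 1))
  rw [shapes, card_union_of_disjoint hdisj, card_product, card_product, card_filter_not_postLe,
    treesOfNumNodesEq_card_eq_catalan] at *
  simp
  omega

theorem exists_qhEquivG_canon [IsPartialOrder (Fin (j + 3)) l]
    (had : AdaptedG (D2le (j + 3)) l) :
    ∃ p ∈ shapes j, QHEquivG (D2le (j + 3)) l (canon j p.1 p.2) := by
  obtain ⟨T, hT, hlT⟩ :=
    exists_qhEquivG_postLe (j + 2) (isPartialOrder_toNatRel ‹_›) (adaptedG_toNatRel had)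
  have hβ : tag l = 2 → postLe T j (j + 1) := fun h2 =>
    (incRelG_chainLe_succ (by omega)).1 <| (hlT.2 j (j + 1)).1 <|
      branch_sink_iff.1 ((source_sink_iff had).2 (Or.inr h2)).2
  have := isPartialOrder_canon (v := tag l) hT
  have hequiv := qhEquivG_equivalence (chainLe (j + 2))
  refine ⟨(T, tag l), mem_shapes.2 ⟨hT, tag_le_two, hβ⟩,
    (qhEquivG_D2le_iff had adaptedG_canon).2 ⟨?_, (tag_canon hT tag_le_two hβ).symm⟩⟩
  exact hequiv.trans hlT (hequiv.symm (qhEquivG_toNatRel_canon hT))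

theorem eq_of_qhEquivG_canon {p p' : BinaryTree Unit × ℕ} (hp : p ∈ shapes j)
    (hp' : p' ∈ shapes j) (h : QHEquivG (D2le (j + 3)) (canon j p.1 p.2) (canon j p'.1 p'.2)) :
    p = p' := by
  obtain ⟨hT, hv, hβ⟩ := mem_shapes.1 hp
  obtain ⟨hT', hv', hβ'⟩ := mem_shapes.1 hp'
  have := isPartialOrder_canon (v := p.2) hT
  have := isPartialOrder_canon (v := p'.2) hT'
  obtain ⟨hc, ht⟩ := (qhEquivG_D2le_iff adaptedG_canon adaptedG_canon).1 h
  have hequiv := qhEquivG_equivalence (chainLe (j + 2))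
  refine Prod.ext (eq_of_qhEquivG_postLe (hT.trans hT'.symm) (hT ▸ ?_)) ?_
  · exact hequiv.trans (hequiv.symm (qhEquivG_toNatRel_canon hT))
      (hequiv.trans hc (qhEquivG_toNatRel_canon hT'))
  · rwa [tag_canon hT hv hβ, tag_canon hT' hv' hβ'] at ht

open Finset in
theorem card_quot_eq_card_shapes (j : ℕ) :
    Nat.card (Quot (fun (l₁ l₂ : {l : Fin (j + 3) → Fin (j + 3) → Prop //
        IsPartialOrder (Fin (j + 3)) l ∧ AdaptedG (D2le (j + 3)) l}) =>
      QHEquivG (D2le (j + 3)) l₁.1 l₂.1)) = #(shapes j) := by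
  rw [← Nat.card_eq_finsetCard]
  refine card_quot_eq_card_of_representatives ((qhEquivG_equivalence _).comap Subtype.val)
    (fun p => ⟨canon j p.1.1 p.1.2, isPartialOrder_canon (mem_shapes.1 p.2).1, adaptedG_canon⟩)
    (fun ⟨l, hpo, had⟩ => ?_) (fun p p' h => Subtype.ext (eq_of_qhEquivG_canon p.2 p'.2 h))
  obtain ⟨p, hp, h⟩ := exists_qhEquivG_canon had
  exact ⟨⟨p, hp⟩, h⟩

end D2

/-- `|qh.str(kD₂)| = 3·C_{n-1} − C_{n-2}` for `n ≥ 3`. -/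
theorem card_qhStr_D2 (n : ℕ) (hn : 3 ≤ n) :
    Nat.card (Quot (fun (l₁ l₂ : {l : Fin n → Fin n → Prop //
        IsPartialOrder (Fin n) l ∧ AdaptedG (D2le n) l}) =>
      QHEquivG (D2le n) l₁.1 l₂.1)) + catalan (n - 2) = 3 * catalan (n - 1) := by
  obtain ⟨j, rfl⟩ : ∃ j, n = j + 3 := ⟨n - 3, by omega⟩
  rw [D2.card_quot_eq_card_shapes]
  exact D2.card_shapes j
end

section
/- The incidence algebra A(P) of a finite poset (P,≤) over a field is hereditary if and only if P is diamond-free, i.e., there are no four elements a,b,c,d with a ≤ b ≤ d, a ≤ c ≤ d, and b,c incomparable. -/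
/-!
Write `e_{xy}` for the matrix units of `A = A(P)` and `e_y = e_{yy}`.

If `a ≤ b, c ≤ d` with `b`, `c` incomparable, the left ideal `A e_{bd} + A e_{cd}` is not
projective: a section of `A² → A e_{bd} + A e_{cd}` would have to respect
`e_{ab} e_{bd} = e_{ad} = e_{ac} e_{cd}`, and comparing `(a, b)` entries gives `1 = 0`.

Conversely let `P` be diamond-free and `N ≤ A^(ι)`. For every `y` choose vectors of `e_y N` forming
a basis modulo the radical part `∑_{z > y} e_{yz} N`. By downward induction on `y` they generate
`N`, and they do so freely as a sum of the projectives `A e_y`. Indeed, a relation among them,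
taken in row `x`, descends to the lowest row `m` it involves: for `p ≥ m`, diamond-freeness makes
every `y ∈ [x, p]` comparable with `m`, so the `(x, p)` and `(m, p)` entries of the relation agree.
Its row-`m` part then lies in the radical part, so its coefficients vanish.
-/

open Finset

theorem LinearMap.projective_range_of_ker_le_ker {R F M : Type*} [Ring R] [AddCommGroup F]
    [Module R F] [Module.Projective R F] [AddCommGroup M] [Module R M] (π : F →ₗ[R] M)
    (ρ : F →ₗ[R] F) (hπρ : π ∘ₗ ρ = π) (hker : ker π ≤ ker ρ) :
    Module.Projective R (range π) := by
  refine .of_split ((ker π).liftQ ρ hker ∘ₗ π.quotKerEquivRange.symm.toLinearMap)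
    π.rangeRestrict (LinearMap.ext ?_)
  intro w
  obtain ⟨φ, rfl⟩ := π.surjective_rangeRestrict w
  apply Subtype.ext
  have : π.quotKerEquivRange.symm (π.rangeRestrict φ) = (ker π).mkQ φ :=
    π.quotKerEquivRange_symm_apply_image φ _
  simpa [this] using LinearMap.congr_fun hπρ φ

theorem Submodule.exists_linearIndepOn_mkQ {K V : Type*} [DivisionRing K] [AddCommGroup V]
    [Module K V] (S R : Submodule K V) :
    ∃ s ⊆ (R : Set V), LinearIndepOn K S.mkQ s ∧ R ≤ span K s ⊔ S := by
  obtain ⟨b, hbR, hspan, hb⟩ := exists_linearIndependent K (S.mkQ '' R)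
  obtain ⟨s, hs, hbij⟩ := Set.exists_subset_bijOn (↑R ∩ S.mkQ ⁻¹' b) S.mkQ
  have himage : S.mkQ '' s = b := by
    rw [hbij.image_eq, Set.image_inter_preimage, Set.inter_eq_right.2 hbR]
  refine ⟨s, hs.trans Set.inter_subset_left, ?_, ?_⟩
  · rw [linearIndepOn_iff_image hbij.injOn, himage]
    exact hb
  · rw [sup_comm, ← comap_map_mkQ, map_span, himage, hspan, ← map_coe, span_eq]
    exact le_comap_map _ _

theorem Finsupp.linearCombination_comp_mapRange_toSpanSingleton {R M ι : Type*} [Semiring R]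
    [AddCommMonoid M] [Module R M] {v : ι → M} {e : R} (hv : ∀ i, e • v i = v i) :
    linearCombination R v ∘ₗ mapRange.linearMap (LinearMap.toSpanSingleton R R e) =
      linearCombination R v :=
  lhom_ext fun i a => by
    simp only [LinearMap.comp_apply, mapRange.linearMap_apply, mapRange_single,
      LinearMap.toSpanSingleton_apply, linearCombination_single, smul_assoc, hv]

def IsDiamondFree (P : Type*) [Preorder P] : Prop :=
  ¬ ∃ a b c d : P, a ≤ b ∧ b ≤ d ∧ a ≤ c ∧ c ≤ d ∧ ¬ b ≤ c ∧ ¬ c ≤ b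

theorem IsDiamondFree.le_or_le {P : Type*} [Preorder P] (hP : IsDiamondFree P) {a b c d : P}
    (hab : a ≤ b) (hbd : b ≤ d) (hac : a ≤ c) (hcd : c ≤ d) : b ≤ c ∨ c ≤ b := by
  by_contra! h
  exact hP ⟨a, b, c, d, hab, hbd, hac, hcd, h.1, h.2⟩

namespace IncidenceAlgebra

section Single

open scoped Classical

variable (K : Type*) {P : Type*} [Semiring K] [Preorder P]

/-- The matrix unit `e_{xy}` of the incidence algebra; it is `0` unless `x ≤ y`. -/
noncomputable def single (x y : P) : IncidenceAlgebra K P :=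
  ⟨fun a b => if a = x ∧ b = y ∧ x ≤ y then 1 else 0, fun _ _ hab =>
    if_neg fun ⟨ha, hb, hxy⟩ => hab (ha ▸ hb ▸ hxy)⟩

lemma single_apply (x y a b : P) :
    single K x y a b = if a = x ∧ b = y ∧ x ≤ y then 1 else 0 := rfl

variable {K}

lemma single_eq_zero_of_not_le {x y : P} (h : ¬ x ≤ y) : single K x y = 0 := by
  ext a b _
  rw [single_apply, zero_apply, if_neg (by tauto)]

lemma sum_apply {ι : Type*} (s : Finset ι) (f : ι → IncidenceAlgebra K P) (a b : P) :
    (∑ i ∈ s, f i) a b = ∑ i ∈ s, f i a b :=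
  map_sum (⟨⟨fun g => g a b, rfl⟩, fun _ _ => rfl⟩ : IncidenceAlgebra K P →+ K) f s

variable [DecidableEq P]

lemma sum_single_self [Fintype P] : ∑ y : P, single K y y = 1 := by
  ext a b _
  rw [sum_apply, one_apply, Finset.sum_eq_single a (fun y _ hy => ?_) (by simp)]
  · by_cases hab : a = b <;> simp [single_apply, hab, eq_comm]
  · rw [single_apply, if_neg (by tauto)]

variable [LocallyFiniteOrder P]

lemma single_mul_apply (x y : P) (f : IncidenceAlgebra K P) (a b : P) :
    (single K x y * f) a b = if a = x ∧ x ≤ y ∧ y ≤ b then f y b else 0 := by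
  rw [mul_apply]
  split_ifs with h
  · obtain ⟨rfl, hxy, hyb⟩ := h
    rw [Finset.sum_eq_single_of_mem y (mem_Icc.2 ⟨hxy, hyb⟩)]
    · rw [single_apply, if_pos ⟨rfl, rfl, hxy⟩, one_mul]
    · intro z _ hz
      rw [single_apply, if_neg (by tauto), zero_mul]
  · refine Finset.sum_eq_zero fun z hz => ?_
    rw [single_apply, if_neg, zero_mul]
    rintro ⟨rfl, rfl, hxy⟩
    exact h ⟨rfl, hxy, (mem_Icc.1 hz).2⟩

lemma mul_single_apply (f : IncidenceAlgebra K P) (x y a b : P) :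
    (f * single K x y) a b = if b = y ∧ x ≤ y ∧ a ≤ x then f a x else 0 := by
  rw [mul_apply]
  split_ifs with h
  · obtain ⟨rfl, hxy, hax⟩ := h
    rw [Finset.sum_eq_single_of_mem x (mem_Icc.2 ⟨hax, hxy⟩)]
    · rw [single_apply, if_pos ⟨rfl, rfl, hxy⟩, mul_one]
    · intro z _ hz
      rw [single_apply, if_neg (by tauto), mul_zero]
  · refine Finset.sum_eq_zero fun z hz => ?_
    rw [single_apply, if_neg, mul_zero]
    rintro ⟨rfl, rfl, hxy⟩
    exact h ⟨rfl, hxy, (mem_Icc.1 hz).1⟩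

lemma single_mul_single {x y z : P} (hxy : x ≤ y) (hyz : y ≤ z) :
    single K x y * single K y z = single K x z := by
  ext a b _
  rw [single_mul_apply, single_apply, single_apply]
  by_cases hb : b = z
  · simp [hb, hxy, hyz, hxy.trans hyz]
  · simp [hb]

lemma single_mul_mul_single (x y : P) (f : IncidenceAlgebra K P) :
    single K x x * f * single K y y = f x y • single K x y := by
  ext a b _
  rw [mul_single_apply, constSMul_apply, single_apply, single_mul_apply]
  by_cases h : a = x ∧ b = y ∧ x ≤ y
  · obtain ⟨rfl, rfl, hab⟩ := h
    simp [hab]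
  · rw [if_neg h, smul_zero, ite_eq_right_iff]
    rintro ⟨rfl, -, hay⟩
    rw [if_neg (by tauto)]

lemma mul_single_self_eq_zero {f : IncidenceAlgebra K P} {y : P} (h : ∀ x, f x y = 0) :
    f * single K y y = 0 := by
  ext a b _
  rw [mul_single_apply, zero_apply]
  split_ifs with hb
  · exact h a
  · rfl

end Single

section Diamond

variable {K P : Type*} [Ring K] [Nontrivial K] [Preorder P] [LocallyFiniteOrder P]
  [DecidableEq P]

theorem not_projective_span_single_pair {a b c d : P} (hab : a ≤ b) (hbd : b ≤ d) (hac : a ≤ c)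
    (hcd : c ≤ d) (hbc : ¬ b ≤ c) (hcb : ¬ c ≤ b) :
    ¬ Module.Projective (IncidenceAlgebra K P)
      (Submodule.span (IncidenceAlgebra K P) {single K b d, single K c d}) := by
  let g := (LinearMap.toSpanSingleton (IncidenceAlgebra K P) _ (single K b d)).coprod
    (LinearMap.toSpanSingleton (IncidenceAlgebra K P) _ (single K c d))
  have hg : LinearMap.range g =
      Submodule.span (IncidenceAlgebra K P) {single K b d, single K c d} := by
    rw [LinearMap.range_coprod, ← LinearMap.span_singleton_eq_range,
      ← LinearMap.span_singleton_eq_range, Submodule.span_insert]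
  rw [← hg]
  intro
  obtain ⟨σ, hσ⟩ := Module.projective_lifting_property g.rangeRestrict LinearMap.id
    g.surjective_rangeRestrict
  let wb : LinearMap.range g := ⟨single K b d, hg ▸ Submodule.subset_span (by simp)⟩
  let wc : LinearMap.range g := ⟨single K c d, hg ▸ Submodule.subset_span (by simp)⟩
  have hσb : (σ wb).1 * single K b d + (σ wb).2 * single K c d = single K b d := by
    simpa [g] using congrArg Subtype.val (LinearMap.congr_fun hσ wb)
  -- `e_{ab} e_{bd} = e_{ad} = e_{ac} e_{cd}`, but only the first factorisation passes through `b`.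
  have hσa : single K a b * (σ wb).1 = single K a c * (σ wc).1 := by
    have hw : single K a b • wb = single K a c • wc :=
      Subtype.ext (by simp [wb, wc, single_mul_single hab hbd, single_mul_single hac hcd])
    simpa using congrArg (fun w => (σ w).1) hw
  have h1 : (σ wb).1 b b = 1 := by
    have := congrArg (fun f : IncidenceAlgebra K P => f b d) hσb
    rw [add_apply, mul_single_apply, mul_single_apply, single_apply] at this
    simpa [hbd, hbc] using this
  have h2 : (σ wb).1 b b = 0 := by
    have := congrArg (fun f : IncidenceAlgebra K P => f a b) hσa
    rw [single_mul_apply, single_mul_apply] at this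
    simpa [hab, hcb] using this
  exact one_ne_zero (h1.symm.trans h2)

end Diamond

section Module

variable {K P M : Type*} [CommRing K] [PartialOrder P] [LocallyFiniteOrder P] [DecidableEq P]
  [AddCommGroup M] [Module (IncidenceAlgebra K P) M] [Module K M]
  (N : Submodule (IncidenceAlgebra K P) M)

/-- The vertex space `e_y (rad N) = ∑_{z > y} e_{yz} N` of the radical of `N`. -/
noncomputable def radicalSpace (y : P) : Submodule K M :=
  Submodule.span K {w | ∃ z, y < z ∧ ∃ n ∈ N, single K y z • n = w}

variable {N} in
lemma single_smul_mem_radicalSpace {y z : P} (hyz : y < z) {n : M} (hn : n ∈ N) :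
    single K y z • n ∈ radicalSpace N y :=
  Submodule.subset_span ⟨z, hyz, n, hn, rfl⟩

variable [IsScalarTower K (IncidenceAlgebra K P) M]

noncomputable def vertexSpace (y : P) : Submodule K M :=
  (N.restrictScalars K).map (DistribSMul.toLinearMap K M (single K y y))

variable {N}

lemma vertexSpace_le (y : P) : vertexSpace N y ≤ N.restrictScalars K := by
  rintro _ ⟨n, hn, rfl⟩
  exact N.smul_mem _ hn

lemma single_smul_mem_vertexSpace {n : M} (hn : n ∈ N) (y : P) :
    single K y y • n ∈ vertexSpace N y :=
  ⟨n, hn, rfl⟩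

lemma single_smul_of_mem_vertexSpace {y : P} {w : M} (hw : w ∈ vertexSpace N y) :
    single K y y • w = w := by
  obtain ⟨n, -, rfl⟩ := hw
  simp [DistribSMul.toLinearMap_apply, smul_smul, single_mul_single le_rfl le_rfl]

lemma single_smul_linearCombination {ι : Type*} {v : ι → M} {y : P}
    (hv : ∀ i, single K y y • v i = v i) (x : P) (φ : ι →₀ IncidenceAlgebra K P) :
    single K x x • Finsupp.linearCombination _ v φ =
      single K x y • Finsupp.linearCombination K v (φ.mapRange (fun a => a x y) rfl) := by
  induction φ using Finsupp.induction_linear with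
  | zero => simp
  | add φ ψ hφ hψ => rw [Finsupp.mapRange_add fun _ _ => rfl, map_add, map_add, smul_add,
      smul_add, hφ, hψ]
  | single i a =>
    rw [Finsupp.linearCombination_single, Finsupp.mapRange_single,
      Finsupp.linearCombination_single, smul_comm (single K x y) (a x y) (v i)]
    conv_lhs => rw [← hv i, smul_smul, smul_smul, single_mul_mul_single, smul_assoc]

variable [Fintype P]

theorem mem_radicalSpace_of_sum_single_smul_eq_zero {u : P → M}
    (hu : ∀ z, u z ∈ vertexSpace N z) {y : P} (h : ∑ z, single K y z • u z = 0) :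
    u y ∈ radicalSpace N y := by
  rw [← Finset.add_sum_erase _ _ (mem_univ y), single_smul_of_mem_vertexSpace (hu y),
    add_eq_zero_iff_eq_neg] at h
  rw [h]
  refine neg_mem (sum_mem fun z hz => ?_)
  by_cases hyz : y ≤ z
  · exact single_smul_mem_radicalSpace (lt_of_le_of_ne hyz (ne_of_mem_erase hz).symm)
      (vertexSpace_le z (hu z))
  · rw [single_eq_zero_of_not_le hyz, zero_smul]
    exact zero_mem _

/-- A graded Nakayama lemma. -/
theorem le_of_vertexSpace_le_sup_radicalSpace {L : Submodule (IncidenceAlgebra K P) M}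
    (hL : ∀ y, vertexSpace N y ≤ L.restrictScalars K ⊔ radicalSpace N y) : N ≤ L := by
  have hvertex : ∀ y, vertexSpace N y ≤ L.restrictScalars K := by
    intro y
    induction y using WellFoundedGT.induction with
    | _ y ih =>
    refine (hL y).trans (sup_le le_rfl (Submodule.span_le.2 ?_))
    rintro _ ⟨z, hyz, n, hn, rfl⟩
    rw [← single_mul_single hyz.le le_rfl, mul_smul]
    exact L.smul_mem _ (ih z hyz (single_smul_mem_vertexSpace hn z))
  intro n hn
  rw [← one_smul (IncidenceAlgebra K P) n, ← sum_single_self, Finset.sum_smul]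
  exact sum_mem fun y _ => hvertex y (single_smul_mem_vertexSpace hn y)

end Module

section DiamondFree

variable {K P : Type*} [PartialOrder P] [Fintype P] [LocallyFiniteOrder P] [DecidableEq P]

/-- For `p ≥ m`, every `y ∈ [x, p]` is comparable with `m`, so the `(x, p)` entry of the first
sum equals the `(m, p)` entry of the second. -/
theorem _root_.IsDiamondFree.sum_single_mul_eq_zero [Semiring K] (hP : IsDiamondFree P)
    {x m : P} (hxm : x ≤ m) {f : P → IncidenceAlgebra K P} (hf : ∀ y < m, f y = 0)
    (h : ∑ y, single K x y * f y = 0) : ∑ y, single K m y * f y = 0 := by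
  classical
  ext a p hap
  have hxp := congrArg (fun g : IncidenceAlgebra K P => g x p) h
  simp only [sum_apply, single_mul_apply, zero_apply, true_and] at hxp ⊢
  by_cases ham : a = m
  · subst ham
    refine Eq.trans (Finset.sum_congr rfl fun y _ => ?_) hxp
    by_cases hay : a ≤ y
    · simp [hay, hxm.trans hay]
    · rw [if_neg (by tauto)]
      split_ifs with hy
      · obtain hya | hay' := hP.le_or_le hy.1 hy.2 hxm hap
        · rw [hf y (lt_of_le_of_ne hya (by rintro rfl; exact hay le_rfl)), zero_apply]
        · exact absurd hay' hay
      · rfl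
  · simp [ham]

theorem _root_.IsDiamondFree.sum_single_smul_eq_zero [Semiring K] (hP : IsDiamondFree P)
    {ι : Type*} {x m : P} (hxm : x ≤ m) {u : P → ι →₀ IncidenceAlgebra K P}
    (hu : ∀ y < m, u y = 0) (h : ∑ y, single K x y • u y = 0) :
    ∑ y, single K m y • u y = 0 := by
  ext i : 1
  have hi := congrArg (· i) h
  simp only [Finsupp.finsetSum_apply, Finsupp.smul_apply, smul_eq_mul,
    Finsupp.coe_zero, Pi.zero_apply] at hi ⊢
  exact hP.sum_single_mul_eq_zero hxm (fun y hy => by rw [hu y hy, Finsupp.zero_apply]) hi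

end DiamondFree

section Hereditary

variable {K P : Type*} [Field K] [PartialOrder P] [Fintype P] [LocallyFiniteOrder P]
  [DecidableEq P] {ι : Type*} {N : Submodule (IncidenceAlgebra K P) (ι →₀ IncidenceAlgebra K P)}

/-- Only the `(x, y)` entries of the coefficients `φ y` matter, as `w = e_y w` for `w ∈ s y`. -/
theorem _root_.IsDiamondFree.mapRange_apply_eq_zero (hP : IsDiamondFree P)
    {s : P → Set (ι →₀ IncidenceAlgebra K P)} (hsN : ∀ y, s y ⊆ vertexSpace N y)
    (hs : ∀ y, LinearIndepOn K (radicalSpace N y).mkQ (s y))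
    {φ : ∀ y, s y →₀ IncidenceAlgebra K P}
    (hφ : ∑ y, Finsupp.linearCombination _ Subtype.val (φ y) = 0) (x y : P) :
    (φ y).mapRange (fun a => a x y) rfl = 0 := by
  let c : ∀ y, s y →₀ K := fun y => (φ y).mapRange (fun a => a x y) rfl
  let u : P → ι →₀ IncidenceAlgebra K P :=
    fun y => Finsupp.linearCombination K Subtype.val (c y)
  have hu (y : P) : u y ∈ vertexSpace N y :=
    Submodule.span_le.2 (hsN y) ((Finsupp.mem_span_iff_linearCombination _ _ _).2 ⟨c y, rfl⟩)
  have hsum : ∑ y, single K x y • u y = 0 := by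
    rw [← smul_zero (single K x x), ← hφ, Finset.smul_sum]
    exact Finset.sum_congr rfl fun y _ => (single_smul_linearCombination
      (fun w => single_smul_of_mem_vertexSpace (hsN y w.2)) x (φ y)).symm
  change c y = 0
  induction y using WellFoundedLT.induction with
  | _ y ih =>
  by_cases hxy : x ≤ y
  · have hrad := mem_radicalSpace_of_sum_single_smul_eq_zero hu
      (hP.sum_single_smul_eq_zero hxy (fun z hz => by simp only [u, ih z hz, map_zero]) hsum)
    refine linearIndependent_iff.1 (hs y) _ ?_
    rw [← Submodule.Quotient.mk_eq_zero, ← Submodule.mkQ_apply,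
      Finsupp.apply_linearCombination] at hrad
    exact hrad
  · ext w
    exact apply_eq_zero_of_not_le hxy _

variable (N) in
theorem _root_.IsDiamondFree.projective_submodule_finsupp (hP : IsDiamondFree P) :
    Module.Projective (IncidenceAlgebra K P) N := by
  choose s hsN hs hspan using
    fun y => (radicalSpace N y).exists_linearIndepOn_mkQ (vertexSpace N y)
  have hv (y : P) (w : s y) : single K y y • (w : ι →₀ IncidenceAlgebra K P) = w :=
    single_smul_of_mem_vertexSpace (hsN y w.2)
  let π : (∀ y, s y →₀ IncidenceAlgebra K P) →ₗ[IncidenceAlgebra K P]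
      ι →₀ IncidenceAlgebra K P :=
    ∑ y, Finsupp.linearCombination _ Subtype.val ∘ₗ LinearMap.proj y
  let ρ : (∀ y, s y →₀ IncidenceAlgebra K P) →ₗ[IncidenceAlgebra K P]
      ∀ y, s y →₀ IncidenceAlgebra K P :=
    LinearMap.piMap fun y =>
      Finsupp.mapRange.linearMap (LinearMap.toSpanSingleton _ _ (single K y y))
  have hπ (φ) : π φ = ∑ y, Finsupp.linearCombination _ Subtype.val (φ y) := by simp [π]
  have hπρ : π ∘ₗ ρ = π := LinearMap.ext fun φ => by
    rw [LinearMap.comp_apply, hπ, hπ]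
    exact sum_congr rfl fun y _ => LinearMap.congr_fun
      (Finsupp.linearCombination_comp_mapRange_toSpanSingleton (hv y)) (φ y)
  have hker : LinearMap.ker π ≤ LinearMap.ker ρ := fun φ hφ => by
    rw [LinearMap.mem_ker, hπ] at hφ
    ext y w : 2
    simp only [ρ, LinearMap.coe_piMap, Pi.map_apply, Finsupp.mapRange.linearMap_apply,
      Finsupp.mapRange_apply, LinearMap.toSpanSingleton_apply, smul_eq_mul]
    exact mul_single_self_eq_zero fun x =>
      DFunLike.congr_fun (hP.mapRange_apply_eq_zero hsN hs hφ x y) w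
  have hrange : LinearMap.range π = N := by
    refine le_antisymm ?_ (le_of_vertexSpace_le_sup_radicalSpace fun y =>
      (hspan y).trans (sup_le_sup_right (Submodule.span_le.2 fun w hw => ?_) _))
    · rintro _ ⟨φ, rfl⟩
      rw [hπ]
      refine sum_mem fun y _ =>
        (Submodule.span_le (p := N)).2 (fun w hw => vertexSpace_le y (hsN y hw))
          ((Finsupp.mem_span_iff_linearCombination (IncidenceAlgebra K P) _ _).2 ⟨φ y, rfl⟩)
    · refine ⟨Pi.single y (Finsupp.single ⟨w, hw⟩ 1), ?_⟩
      rw [hπ, Finset.sum_eq_single_of_mem y (mem_univ y) fun z _ hz => by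
        rw [Pi.single_eq_of_ne hz, map_zero]]
      simp
  rw [← hrange]
  exact π.projective_range_of_ker_le_ker ρ hπρ hker

end Hereditary

end IncidenceAlgebra

theorem incidenceAlgebra_hereditary_iff_diamondFree
    (K : Type) [Field K] (P : Type) [PartialOrder P] [Fintype P]
    [LocallyFiniteOrder P] [DecidableEq P] :
    (∀ (M : Type) [AddCommGroup M] [Module (IncidenceAlgebra K P) M],
        Module.Projective (IncidenceAlgebra K P) M →
        ∀ N : Submodule (IncidenceAlgebra K P) M,
          Module.Projective (IncidenceAlgebra K P) N) ↔
      ¬ ∃ a b c d : P, a ≤ b ∧ b ≤ d ∧ a ≤ c ∧ c ≤ d ∧ ¬ b ≤ c ∧ ¬ c ≤ b := by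
  refine ⟨fun h ⟨a, b, c, d, hab, hbd, hac, hcd, hbc, hcb⟩ =>
    IncidenceAlgebra.not_projective_span_single_pair hab hbd hac hcd hbc hcb
      (h _ inferInstance _), fun hP M _ _ hM N => ?_⟩
  obtain ⟨s, hs⟩ := Module.projective_def.1 hM
  have := IsDiamondFree.projective_submodule_finsupp (N.map s) hP
  exact .of_equiv (Submodule.equivMapOfInjective s hs.injective N).symm
end

section
/- Let (P,≤) be a finite diamond-free poset and ⊲₁, ⊲₂ two partial orders on P. Define, for i ≤ j in P: j ⊲ᴰ i iff every k ∈ [i,j] satisfies k ⊲₁ i and k ⊲₂ i. Then the relation ⊲ᴰ is transitive. -/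
/-!
STATEMENT 14. Let `(P, ≤)` be a finite diamond-free poset and `⊲₁`, `⊲₂` two partial orders
on `P`.  Define `j ⊲ᴰ i` (for `i ≤ j`) iff every `k ∈ [i, j]` satisfies `k ⊲₁ i` and `k ⊲₂ i`.
Then `⊲ᴰ` is transitive.
-/

theorem decRel_inter_transitive
    {P : Type*} [PartialOrder P] [Finite P]
    (hdf : ¬ ∃ a b c d : P, a ≤ b ∧ b ≤ d ∧ a ≤ c ∧ c ≤ d ∧ ¬ b ≤ c ∧ ¬ c ≤ b)
    (lhd₁ lhd₂ : P → P → Prop)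
    (h₁ : IsPartialOrder P lhd₁) (h₂ : IsPartialOrder P lhd₂) :
    Transitive (fun j i => i ≤ j ∧ ∀ k, i ≤ k → k ≤ j → lhd₁ k i ∧ lhd₂ k i) := by
  rintro a b c ⟨hba, hab⟩ ⟨hcb, hbc⟩
  refine ⟨hcb.trans hba, fun k hck hka => ?_⟩
  by_cases hkb : k ≤ b
  · exact hbc k hck hkb
  · have hbk : b ≤ k := by
      by_contra hbk
      exact hdf ⟨c, k, b, a, hck, hka, hcb, hba, hkb, hbk⟩
    have hk := hab k hbk hka
    have hb := hbc b hcb le_rfl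
    exact ⟨h₁.trans _ _ _ hk.1 hb.1, h₂.trans _ _ _ hk.2 hb.2⟩
end

section
/- Let (P,≤) be a finite poset that has no full subposet isomorphic to the zigzag crown Z_n for any even n ≥ 4, and let ℓ ≥ 3 be odd. If elements i₀, i₁, …, i_ℓ of P satisfy the alternating relations i₀ ≥ i₁ ≤ i₂ ≥ ⋯ ≤ i_{ℓ−1} ≥ i_ℓ ≤ i₀, then there exists an index k (taken modulo ℓ+1) such that i_k ≤ i_{k+2} or i_{k+2} ≤ i_k. -/
/-!
STATEMENT 15. `Z_n` (`n` even) is the crown poset whose Hasse diagram is the zigzag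
orientation of the affine type `A` cycle.  Here, on `Fin n` (0-based, so the element of
value `v` plays the role of the label `v + 1`), elements of even value are minimal and lie
below their two cyclic neighbours.
-/

/-- The crown (zigzag) partial order `Z_n` on `Fin n` (`n` even): an element of even value is
below its two cyclic neighbours, and everything is related to itself. -/
def crownLE (n : ℕ) (a b : Fin n) : Prop :=
  a = b ∨ (Even a.val ∧ (b.val = (a.val + 1) % n ∨ b.val = (a.val + (n - 1)) % n))

private lemma parity_mod (p k : ℕ) (hp : p % 2 = 0) : k % p % 2 = k % 2 := by
  rcases Nat.eq_zero_or_pos p with h | h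
  · subst h; simp
  · obtain ⟨s, hs⟩ : ∃ s, p = 2 * s := ⟨p / 2, by omega⟩
    have h1 := Nat.div_add_mod k p
    have h2 : k = 2 * (s * (k / p)) + k % p := by
      conv_lhs => rw [← h1]
      rw [hs]; ring
    omega

private lemma aux {P : Type*} [PartialOrder P]
    (hZ : ∀ n : ℕ, 4 ≤ n → Even n →
      ¬ ∃ f : Fin n → P, Function.Injective f ∧ ∀ a b, crownLE n a b ↔ f a ≤ f b) :
    ∀ l : ℕ, 3 ≤ l → Odd l → ∀ i : ℕ → P,
      (∀ k, i (k + (l + 1)) = i k) →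
      (∀ k, (Even k → i (k + 1) ≤ i k) ∧ (Odd k → i k ≤ i (k + 1))) →
      ∃ k : ℕ, i k ≤ i (k + 2) ∨ i (k + 2) ≤ i k := by
  intro l
  induction l using Nat.strong_induction_on with
  | _ l IH =>
  intro hl3 hlodd i hper hchain
  by_contra hcon
  push_neg at hcon
  set m := l + 1 with hm
  have hm2 : m % 2 = 0 := by
    obtain ⟨t, ht⟩ := hlodd; omega
  have hm4 : 4 ≤ m := by omega
  have hdown : ∀ k, k % 2 = 0 → i (k + 1) ≤ i k := fun k hk =>
    (hchain k).1 (Nat.even_iff.mpr hk)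
  have hup : ∀ k, k % 2 = 1 → i k ≤ i (k + 1) := fun k hk =>
    (hchain k).2 (Nat.odd_iff.mpr hk)
  have hperN : ∀ t k, i (m * t + k) = i k := by
    intro t
    induction t with
    | zero => intro k; simp
    | succ t iht =>
      intro k
      have h1 : m * (t + 1) + k = (m * t + k) + m := by ring
      rw [h1, hper (m * t + k), iht k]
  have hmodi : ∀ x y : ℕ, x % m = y % m → i x = i y := by
    intro x y h
    have e1 : ∀ z : ℕ, i z = i (z % m) := by
      intro z
      conv_lhs => rw [← Nat.div_add_mod z m]
      exact hperN (z / m) (z % m)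
    rw [e1 x, e1 y, h]
  -- Step 1: no "chord" exists
  have L1 : ∀ n a d, a % 2 = 1 → d % 2 = 1 → 3 ≤ d → d + 3 ≤ m →
      i a ≤ i (a + d) → min d (m - d) ≤ n → False := by
    intro n
    induction n with
    | zero => intro a d _ _ hd3 hdm _ hmin; omega
    | succ n ihn =>
      intro a d ha2 hd2 hd3 hdm hch hmin
      rcases le_or_gt d (m - d) with hcmp | hcmp
      · -- short cycle along the chord, length d
        have hchainj : ∀ k : ℕ,
            (Even k → i (a + (k + 1 + 1) % (d + 1)) ≤ i (a + (k + 1) % (d + 1))) ∧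
            (Odd k → i (a + (k + 1) % (d + 1)) ≤ i (a + (k + 1 + 1) % (d + 1))) := by
          intro k
          have hrlt : (k + 1) % (d + 1) < d + 1 := Nat.mod_lt _ (by omega)
          have hrpar : (k + 1) % (d + 1) % 2 = (k + 1) % 2 :=
            parity_mod (d + 1) (k + 1) (by omega)
          have hr2 : (k + 1 + 1) % (d + 1) = ((k + 1) % (d + 1) + 1) % (d + 1) := by
            rw [Nat.mod_add_mod]
          constructor
          · intro hk
            have hk2 : k % 2 = 0 := Nat.even_iff.mp hk
            rw [hr2]
            rcases eq_or_lt_of_le (show (k + 1) % (d + 1) + 1 ≤ d + 1 by omega) with he | hlt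
            · rw [he, Nat.mod_self]
              have hrd : (k + 1) % (d + 1) = d := by omega
              rw [hrd, Nat.add_zero]
              exact hch
            · rw [Nat.mod_eq_of_lt hlt,
                show a + ((k + 1) % (d + 1) + 1) = (a + (k + 1) % (d + 1)) + 1 by omega]
              exact hdown _ (by omega)
          · intro hk
            have hk2 : k % 2 = 1 := Nat.odd_iff.mp hk
            have hlt : (k + 1) % (d + 1) + 1 < d + 1 := by omega
            rw [hr2, Nat.mod_eq_of_lt hlt,
              show a + ((k + 1) % (d + 1) + 1) = (a + (k + 1) % (d + 1)) + 1 by omega]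
            exact hup _ (by omega)
        have hperj : ∀ k : ℕ,
            i (a + (k + (d + 1) + 1) % (d + 1)) = i (a + (k + 1) % (d + 1)) := by
          intro k
          rw [show k + (d + 1) + 1 = (k + 1) + (d + 1) by omega, Nat.add_mod_right]
        obtain ⟨k0, hk0⟩ := IH d (by omega) hd3 (Nat.odd_iff.mpr hd2)
          (fun k => i (a + (k + 1) % (d + 1))) hperj hchainj
        -- (already beta-reduced)
        have hr3 : (k0 + 2 + 1) % (d + 1) = ((k0 + 1) % (d + 1) + 2) % (d + 1) := by
          rw [Nat.mod_add_mod, show k0 + 1 + 2 = k0 + 2 + 1 by omega]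
        rw [hr3] at hk0
        have hrlt : (k0 + 1) % (d + 1) < d + 1 := Nat.mod_lt _ (by omega)
        have hrpar : (k0 + 1) % (d + 1) % 2 = (k0 + 1) % 2 :=
          parity_mod (d + 1) (k0 + 1) (by omega)
        generalize hg : (k0 + 1) % (d + 1) = r at hrlt hrpar hk0
        rcases lt_trichotomy (r + 2) (d + 1) with hlt | heq | hgt
        · rw [Nat.mod_eq_of_lt hlt, show a + (r + 2) = a + r + 2 by omega] at hk0
          rcases hk0 with h | h
          · exact (hcon (a + r)).1 h
          · exact (hcon (a + r)).2 h
        · -- r = d - 1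
          rw [heq, Nat.mod_self, Nat.add_zero] at hk0
          rcases Nat.lt_or_ge d 5 with hd5 | hd5
          · -- d = 3, r = 2
            rw [show a + r = a + 2 by omega] at hk0
            rcases hk0 with h | h
            · exact (hcon a).2 h
            · exact (hcon a).1 h
          · rcases hk0 with h | h
            · -- chord (a + r, m - d + 2)
              have hstep : i (a + r) ≤ i (a + 1) := h.trans (hup a ha2)
              refine ihn (a + r) (m - d + 2) (by omega) (by omega) (by omega) (by omega)
                ?_ (by omega)
              have hE : i (a + r + (m - d + 2)) = i (a + 1) := by
                apply hmodi
                rw [show a + r + (m - d + 2) = (a + 1) + m by omega, Nat.add_mod_right]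
              rw [hE]; exact hstep
            · -- chord (a, d - 2)
              have hstep : i (a + r) ≤ i (a + (d - 2)) := by
                rw [show a + r = a + (d - 2) + 1 by omega]
                exact hdown _ (by omega)
              exact ihn a (d - 2) ha2 (by omega) (by omega) (by omega)
                (h.trans hstep) (by omega)
        · -- r = d
          have h1 : (r + 2) % (d + 1) = 1 := by
            rw [show r + 2 = (d + 1) + 1 by omega, Nat.add_mod_left,
              Nat.mod_eq_of_lt (by omega)]
          rw [h1] at hk0
          rcases Nat.lt_or_ge d 5 with hd5 | hd5
          · rw [show a + r = a + 1 + 2 by omega] at hk0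
            rcases hk0 with h | h
            · exact (hcon (a + 1)).2 h
            · exact (hcon (a + 1)).1 h
          · rcases hk0 with h | h
            · -- chord (a + (d - 1), m - d + 2)
              have hstep : i (a + (d - 1)) ≤ i (a + r) := by
                rw [show a + r = a + (d - 1) + 1 by omega]
                exact hup _ (by omega)
              refine ihn (a + (d - 1)) (m - d + 2) (by omega) (by omega) (by omega)
                (by omega) ?_ (by omega)
              have hE : i (a + (d - 1) + (m - d + 2)) = i (a + 1) := by
                apply hmodi
                rw [show a + (d - 1) + (m - d + 2) = (a + 1) + m by omega, Nat.add_mod_right]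
              rw [hE]; exact hstep.trans h
            · -- chord (a + 2, d - 2)
              have hstep : i (a + 2) ≤ i (a + 1) := by
                rw [show a + 2 = a + 1 + 1 by omega]
                exact hdown _ (by omega)
              refine ihn (a + 2) (d - 2) (by omega) (by omega) (by omega) (by omega)
                ?_ (by omega)
              rw [show a + 2 + (d - 2) = a + r by omega]
              exact hstep.trans h
      · -- short cycle along the other arc, length m - d
        have hchainj : ∀ k : ℕ,
            (Even k → i (a + d + (k + 1) % (m - d + 1)) ≤ i (a + d + k % (m - d + 1))) ∧
            (Odd k → i (a + d + k % (m - d + 1)) ≤ i (a + d + (k + 1) % (m - d + 1))) := by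
          intro k
          have hrlt : k % (m - d + 1) < m - d + 1 := Nat.mod_lt _ (by omega)
          have hrpar : k % (m - d + 1) % 2 = k % 2 := parity_mod (m - d + 1) k (by omega)
          have hr2 : (k + 1) % (m - d + 1) = (k % (m - d + 1) + 1) % (m - d + 1) := by
            rw [Nat.mod_add_mod]
          constructor
          · intro hk
            have hk2 : k % 2 = 0 := Nat.even_iff.mp hk
            have hlt : k % (m - d + 1) + 1 < m - d + 1 := by omega
            rw [hr2, Nat.mod_eq_of_lt hlt,
              show a + d + (k % (m - d + 1) + 1) = (a + d + k % (m - d + 1)) + 1 by omega]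
            exact hdown _ (by omega)
          · intro hk
            have hk2 : k % 2 = 1 := Nat.odd_iff.mp hk
            rcases eq_or_lt_of_le (show k % (m - d + 1) + 1 ≤ m - d + 1 by omega) with he | hlt
            · rw [hr2, he, Nat.mod_self, Nat.add_zero]
              have hL : i (a + d + k % (m - d + 1)) = i a := by
                apply hmodi
                rw [show a + d + k % (m - d + 1) = a + m by omega, Nat.add_mod_right]
              rw [hL]
              exact hch
            · rw [hr2, Nat.mod_eq_of_lt hlt,
                show a + d + (k % (m - d + 1) + 1) = (a + d + k % (m - d + 1)) + 1 by omega]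
              exact hup _ (by omega)
        have hperj : ∀ k : ℕ,
            i (a + d + (k + (m - d + 1)) % (m - d + 1)) = i (a + d + k % (m - d + 1)) := by
          intro k
          rw [Nat.add_mod_right]
        obtain ⟨k0, hk0⟩ := IH (m - d) (by omega) (by omega) (Nat.odd_iff.mpr (by omega))
          (fun k => i (a + d + k % (m - d + 1))) hperj hchainj
        -- (already beta-reduced)
        have hr3 : (k0 + 2) % (m - d + 1) = (k0 % (m - d + 1) + 2) % (m - d + 1) := by
          rw [Nat.mod_add_mod]
        rw [hr3] at hk0
        have hrlt : k0 % (m - d + 1) < m - d + 1 := Nat.mod_lt _ (by omega)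
        have hrpar : k0 % (m - d + 1) % 2 = k0 % 2 := parity_mod (m - d + 1) k0 (by omega)
        generalize hg : k0 % (m - d + 1) = r at hrlt hrpar hk0
        rcases lt_trichotomy (r + 2) (m - d + 1) with hlt | heq | hgt
        · rw [Nat.mod_eq_of_lt hlt, show a + d + (r + 2) = a + d + r + 2 by omega] at hk0
          rcases hk0 with h | h
          · exact (hcon (a + d + r)).1 h
          · exact (hcon (a + d + r)).2 h
        · -- r = m - d - 1
          rw [heq, Nat.mod_self, Nat.add_zero] at hk0
          rcases Nat.lt_or_ge (m - d) 5 with hc5 | hc5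
          · rw [show a + d + r = a + d + 2 by omega] at hk0
            rcases hk0 with h | h
            · exact (hcon (a + d)).2 h
            · exact (hcon (a + d)).1 h
          · rcases hk0 with h | h
            · -- chord (a + m - 2, d + 2)
              have hstep : i (a + m - 2) ≤ i (a + d + r) := by
                rw [show a + d + r = (a + m - 2) + 1 by omega]
                exact hup _ (by omega)
              refine ihn (a + m - 2) (d + 2) (by omega) (by omega) (by omega) (by omega)
                ?_ (by omega)
              have hE : i (a + m - 2 + (d + 2)) = i (a + d) := by
                apply hmodi
                rw [show a + m - 2 + (d + 2) = (a + d) + m by omega, Nat.add_mod_right]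
              rw [hE]; exact hstep.trans h
            · -- chord (a + d + 1, m - d - 2)
              have hstep : i (a + d + 1) ≤ i (a + d) := hdown (a + d) (by omega)
              refine ihn (a + d + 1) (m - d - 2) (by omega) (by omega) (by omega) (by omega)
                ?_ (by omega)
              rw [show a + d + 1 + (m - d - 2) = a + d + r by omega]
              exact hstep.trans h
        · -- r = m - d
          have h1 : (r + 2) % (m - d + 1) = 1 := by
            rw [show r + 2 = (m - d + 1) + 1 by omega, Nat.add_mod_left,
              Nat.mod_eq_of_lt (by omega)]
          rw [h1] at hk0
          rcases Nat.lt_or_ge (m - d) 5 with hc5 | hc5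
          · rw [show a + d + r = a + d + 1 + 2 by omega] at hk0
            rcases hk0 with h | h
            · exact (hcon (a + d + 1)).2 h
            · exact (hcon (a + d + 1)).1 h
          · have hIa : i (a + d + r) = i a := by
              apply hmodi
              rw [show a + d + r = a + m by omega, Nat.add_mod_right]
            rw [hIa] at hk0
            rcases hk0 with h | h
            · -- chord (a, d + 2)
              have hstep : i (a + d + 1) ≤ i (a + d + 1 + 1) := hup _ (by omega)
              refine ihn a (d + 2) ha2 (by omega) (by omega) (by omega) ?_ (by omega)
              rw [show a + (d + 2) = a + d + 1 + 1 by omega]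
              exact h.trans hstep
            · -- chord (a + d + 1, m - d - 2)
              have hstep : i a ≤ i (a + m - 1) := by
                have hIb : i a = i (a + m - 1 + 1) := by
                  apply hmodi
                  rw [show a + m - 1 + 1 = a + m by omega, Nat.add_mod_right]
                rw [hIb]
                exact hdown (a + m - 1) (by omega)
              refine ihn (a + d + 1) (m - d - 2) (by omega) (by omega) (by omega) (by omega)
                ?_ (by omega)
              rw [show a + d + 1 + (m - d - 2) = a + m - 1 by omega]
              exact h.trans hstep
  have noChord : ∀ x e : ℕ, x % 2 = 1 → e % 2 = 1 → 3 ≤ e → e + 3 ≤ m →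
      i x ≤ i (x + e) → False :=
    fun x e h1 h2 h3 h4 h5 => L1 (min e (m - e)) x e h1 h2 h3 h4 h5 le_rfl
  -- Step 2: classification of comparabilities
  have L2 : ∀ x e : ℕ, e < m → i x ≤ i (x + e) →
      e = 0 ∨ (x % 2 = 1 ∧ (e = 1 ∨ e + 1 = m)) := by
    intro x e he hle
    by_cases h0 : e = 0
    · exact Or.inl h0
    by_cases h1 : e = 1
    · subst h1
      by_cases hx : x % 2 = 1
      · exact Or.inr ⟨hx, Or.inl rfl⟩
      · exfalso
        have h2 := hdown x (by omega)
        have h3 := hup (x + 1) (by omega)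
        exact (hcon x).1 ((le_antisymm hle h2).le.trans h3)
    by_cases h2 : e = 2
    · subst h2; exact absurd hle (hcon x).1
    by_cases hm1 : e + 1 = m
    · by_cases hx : x % 2 = 1
      · exact Or.inr ⟨hx, Or.inr hm1⟩
      · exfalso
        have h3 : i (x + e) ≤ i x := by
          have h4 := hup (x + e) (by omega)
          have h5 : i (x + e + 1) = i x := by
            apply hmodi
            rw [show x + e + 1 = x + m by omega, Nat.add_mod_right]
          rw [h5] at h4
          exact h4
        have heq : i (x + e) = i x := le_antisymm h3 hle
        have h6 : i (x + e) ≤ i (x + (e - 1)) := by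
          rw [show x + e = x + (e - 1) + 1 by omega]
          exact hdown _ (by omega)
        have h7 : i (x + (e - 1) + 2) = i x := by
          apply hmodi
          rw [show x + (e - 1) + 2 = x + m by omega, Nat.add_mod_right]
        exact (hcon (x + (e - 1))).2 (by rw [h7]; exact heq.symm.le.trans h6)
    by_cases hm2' : e + 2 = m
    · exfalso
      have h5 : i (x + e + 2) = i x := by
        apply hmodi
        rw [show x + e + 2 = x + m by omega, Nat.add_mod_right]
      exact (hcon (x + e)).2 (by rw [h5]; exact hle)
    · exfalso
      have he3 : 3 ≤ e := by omega
      have hem : e + 3 ≤ m := by omega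
      rcases Nat.mod_two_eq_zero_or_one x with hx0 | hx1
      · rcases Nat.mod_two_eq_zero_or_one e with he0 | he1
        · -- x even, e even: chord (x + 1, e - 1)
          have h4 : i (x + 1) ≤ i x := hdown x hx0
          refine noChord (x + 1) (e - 1) (by omega) (by omega) (by omega) (by omega) ?_
          rw [show x + 1 + (e - 1) = x + e by omega]
          exact h4.trans hle
        · -- x even, e odd: chord (x + 1, e)
          have h4 : i (x + 1) ≤ i x := hdown x hx0
          have h5 : i (x + e) ≤ i (x + e + 1) := hup (x + e) (by omega)
          refine noChord (x + 1) e (by omega) he1 he3 (by omega) ?_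
          rw [show x + 1 + e = x + e + 1 by omega]
          exact (h4.trans hle).trans h5
      · rcases Nat.mod_two_eq_zero_or_one e with he0 | he1
        · -- x odd, e even: chord (x, e + 1)
          have h5 : i (x + e) ≤ i (x + e + 1) := hup (x + e) (by omega)
          refine noChord x (e + 1) hx1 (by omega) (by omega) (by omega) ?_
          rw [show x + (e + 1) = x + e + 1 by omega]
          exact hle.trans h5
        · exact noChord x e hx1 he1 he3 hem hle
  -- arithmetic helpers
  have hdec : ∀ x y v : ℕ, x < m → y < m → (y + m - x) % m = v →
      y + m - x = v ∨ y + m - x = m + v := by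
    intro x y v hx hy hv
    rcases le_or_gt x y with h | h
    · right
      rw [show y + m - x = (y - x) + m by omega, Nat.add_mod_right,
        Nat.mod_eq_of_lt (by omega)] at hv
      omega
    · left
      rw [Nat.mod_eq_of_lt (by omega)] at hv
      exact hv
  have hcong : ∀ x y : ℕ, x < m → (x + 1 + (y + m - x) % m) % m = (y + 1) % m := by
    intro x y hx
    rw [Nat.add_mod_mod, show x + 1 + (y + m - x) = y + 1 + m by omega, Nat.add_mod_right]
  have inj' : ∀ x y : ℕ, x < m → y < m → i (x + 1) = i (y + 1) → x = y := by
    intro x y hx hy hxy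
    have hel : (y + m - x) % m < m := Nat.mod_lt _ (by omega)
    have hle1 : i (x + 1) ≤ i (x + 1 + (y + m - x) % m) :=
      le_of_eq (hxy.trans (hmodi _ _ (hcong x y hx)).symm)
    rcases L2 (x + 1) ((y + m - x) % m) hel hle1 with h0 | ⟨hxodd, hee⟩
    · rcases hdec x y 0 hx hy h0 with h | h <;> omega
    · have hel' : (x + m - y) % m < m := Nat.mod_lt _ (by omega)
      have hle2 : i (y + 1) ≤ i (y + 1 + (x + m - y) % m) :=
        le_of_eq (hxy.symm.trans (hmodi _ _ (hcong y x hy)).symm)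
      rcases L2 (y + 1) ((x + m - y) % m) hel' hle2 with h0' | ⟨hyodd, _⟩
      · rcases hdec y x 0 hy hx h0' with h | h <;> omega
      · exfalso
        rcases hee with h | h
        · rcases hdec x y 1 hx hy h with h2 | h2 <;> omega
        · rcases hdec x y (m - 1) hx hy (by omega) with h2 | h2 <;> omega
  -- Step 3: build a crown, contradiction
  apply hZ m hm4 (Nat.even_iff.mpr hm2)
  refine ⟨fun v : Fin m => i (v.val + 1), ?_, ?_⟩
  · intro α β hfe
    exact Fin.ext (inj' α.val β.val α.isLt β.isLt hfe)
  · intro a b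
    constructor
    · rintro (rfl | ⟨hev, hb | hb⟩)
      · exact le_rfl
      · have hE : i ((b : Fin m).val + 1) = i (a.val + 1 + 1) := by
          apply hmodi
          rw [hb, Nat.mod_add_mod]
        show i (a.val + 1) ≤ i (b.val + 1)
        rw [hE]
        exact hup (a.val + 1) (by have := Nat.even_iff.mp hev; omega)
      · have hE : i ((b : Fin m).val + 1) = i (a.val) := by
          apply hmodi
          rw [hb, Nat.mod_add_mod, show a.val + (m - 1) + 1 = a.val + m by omega,
            Nat.add_mod_right]
        show i (a.val + 1) ≤ i (b.val + 1)
        rw [hE]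
        exact hdown a.val (Nat.even_iff.mp hev)
    · intro hle
      have hle' : i (a.val + 1) ≤ i (b.val + 1) := hle
      have hel : (b.val + m - a.val) % m < m := Nat.mod_lt _ (by omega)
      have hle1 : i (a.val + 1) ≤ i (a.val + 1 + (b.val + m - a.val) % m) := by
        rw [hmodi _ _ (hcong a.val b.val a.isLt)]
        exact hle'
      rcases L2 (a.val + 1) ((b.val + m - a.val) % m) hel hle1 with h0 | ⟨hxodd, he1 | hem⟩
      · left
        rcases hdec a.val b.val 0 a.isLt b.isLt h0 with h | h <;> exact Fin.ext (by omega)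
      · right
        refine ⟨Nat.even_iff.mpr (by omega), Or.inl ?_⟩
        rcases hdec a.val b.val 1 a.isLt b.isLt he1 with h | h
        · rw [show a.val + 1 = m by omega, Nat.mod_self]; omega
        · rw [Nat.mod_eq_of_lt (show a.val + 1 < m by omega)]; omega
      · right
        refine ⟨Nat.even_iff.mpr (by omega), Or.inr ?_⟩
        rcases hdec a.val b.val (m - 1) a.isLt b.isLt (by omega) with h | h
        · rw [show a.val + (m - 1) = (a.val - 1) + m by omega, Nat.add_mod_right,
            Nat.mod_eq_of_lt (by omega)]
          omega
        · rw [show a.val + (m - 1) = m - 1 by omega, Nat.mod_eq_of_lt (by omega)]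
          omega

/-- if a finite poset `P` has no full subposet isomorphic to `Z_n` for any even
`n ≥ 4`, and `i₀ ≥ i₁ ≤ i₂ ≥ ⋯ ≤ i_{ℓ-1} ≥ i_ℓ ≤ i₀` is an alternating cyclic chain with
`ℓ ≥ 3` odd (encoded by a `(ℓ+1)`-periodic function `i : ℕ → P`), then some `i_k` is
comparable to `i_{k+2}`. -/
theorem exists_comparable_of_alternating_cycle
    {P : Type*} [PartialOrder P] [Finite P]
    (hZ : ∀ n : ℕ, 4 ≤ n → Even n →
      ¬ ∃ f : Fin n → P, Function.Injective f ∧ ∀ a b, crownLE n a b ↔ f a ≤ f b)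
    (l : ℕ) (hl3 : 3 ≤ l) (hlodd : Odd l) (i : ℕ → P)
    (hper : ∀ k, i (k + (l + 1)) = i k)
    (hchain : ∀ k, (Even k → i (k + 1) ≤ i k) ∧ (Odd k → i k ≤ i (k + 1))) :
    ∃ k : ℕ, i k ≤ i (k + 2) ∨ i (k + 2) ≤ i k := by
  exact aux hZ l hl3 hlodd i hper hchain
end

section
/- Let (P,≤) be a finite diamond-free poset having no full subposet isomorphic to Z_n for any even n ≥ 4, and let ⊲₁, ⊲₂ be two adapted orders on P (with respect to the incidence algebra A(P)). Then the transitive closure of (Dec(⊲₁) ∩ Dec(⊲₂)) ∪ Inc(⊲₁) ∪ Inc(⊲₂) is a partial order on P (i.e., it is antisymmetric). -/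
/-!
A cycle of the transitive closure is a closed walk made of ascents (steps in some `Inc(⊲ᵢ)`)
and strict descents (steps in every `Dec(⊲ᵢ)`); without descents it is constant. Take a closed
walk with the least positive number `s` of descents and unroll it into valleys `v t` and peaks
`w t` (`t` modulo `s`), with ascents `v t ⇝ w t` and descents `w t → v (t + 1)`.

Two facts drive the argument: intervals are chains, and by adaptedness every interval has a
`⊲ᵢ`-greatest element, so from `x ≤ y` one can ascend towards `y` until `y` descends to the
current point. With these, a single descent cannot be closed up by ascents, and any
comparability between neighbouring valleys or neighbouring peaks yields a closed walk with fewer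
descents. Finally, the shortest chord (a comparability between a valley and a peak spanning
`ρ ≥ 2` valleys) cuts out `ρ` valleys and `ρ` peaks forming a crown `Z_{2ρ}`, which is excluded.
-/

section
variable {P : Type*} [PartialOrder P]

/-- Adaptedness of a partial order `⊲` for the (hereditary) incidence algebra of `(P, ≤)`. -/
def AdaptedOrd (lhd : P → P → Prop) : Prop :=
  ∀ i j : P, i ≤ j → ¬ lhd i j → ¬ lhd j i →
    ∃ k : P, i ≤ k ∧ k ≤ j ∧ lhd i k ∧ lhd j k

/-- `(x, y) ∈ Dec(⊲)` : `S(x)` is a composition factor of the standard module `Δ(y)`. -/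
def DecRel (lhd : P → P → Prop) (x y : P) : Prop :=
  y ≤ x ∧ ∀ k : P, y ≤ k → k ≤ x → lhd k y

/-- `(x, y) ∈ Inc(⊲)` : `S(x)` is a composition factor of the costandard module `∇(y)`. -/
def IncRel (lhd : P → P → Prop) (x y : P) : Prop :=
  x ≤ y ∧ ∀ k : P, x ≤ k → k ≤ y → lhd k y

end

open Relation Set

theorem Set.Finite.exists_maximal_rel {α : Type*} (r : α → α → Prop) [IsTrans α r] {s : Set α}
    (hs : s.Finite) (hne : s.Nonempty) : ∃ k ∈ s, ∀ j ∈ s, r k j → r j k := by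
  let _ : LE α := ⟨r⟩
  obtain ⟨k, hk⟩ := hs.exists_maximal hne
  exact ⟨k, hk.prop, fun j hj => hk.le_of_ge hj⟩

section Intervals

variable {P : Type*} [PartialOrder P] {lhd : P → P → Prop} {x y z : P}

theorem AdaptedOrd.exists_top_Icc [Finite P] [IsTrans P lhd] (had : AdaptedOrd lhd)
    (hP : ∀ a b : P, IsChain (· ≤ ·) (Icc a b)) (hxy : x ≤ y) :
    ∃ k ∈ Icc x y, ∀ j ∈ Icc x y, lhd j k := by
  obtain ⟨k, hk, hmax⟩ := (toFinite (Icc x y)).exists_maximal_rel lhd ⟨x, left_mem_Icc.2 hxy⟩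
  refine ⟨k, hk, fun j hj => by_contra fun hjk => ?_⟩
  have hkj : ¬ lhd k j := fun hkj => hjk (hmax j hj hkj)
  obtain ⟨m, hm, hjm, hkm⟩ : ∃ m ∈ Icc x y, lhd j m ∧ lhd k m := by
    rcases (hP x y).total hj hk with hle | hle
    · obtain ⟨m, hm₁, hm₂, hjm, hkm⟩ := had j k hle hjk hkj
      exact ⟨m, ⟨hj.1.trans hm₁, hm₂.trans hk.2⟩, hjm, hkm⟩
    · obtain ⟨m, hm₁, hm₂, hkm, hjm⟩ := had k j hle hkj hjk
      exact ⟨m, ⟨hk.1.trans hm₁, hm₂.trans hj.2⟩, hjm, hkm⟩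
  exact hjk (trans_of lhd hjm (hmax m hm hkm))

theorem DecRel.le (h : DecRel lhd x y) : y ≤ x := h.1

theorem IncRel.le (h : IncRel lhd x y) : x ≤ y := h.1

theorem DecRel.refl [Std.Refl lhd] (x : P) : DecRel lhd x x :=
  ⟨le_rfl, fun k h₁ h₂ => le_antisymm h₂ h₁ ▸ refl_of lhd k⟩

theorem IncRel.rel (h : IncRel lhd x y) : lhd x y := h.2 x le_rfl h.1

theorem DecRel.of_mem_Icc (h : DecRel lhd x y) (hz : z ∈ Icc y x) : DecRel lhd z y :=
  ⟨hz.1, fun k h₁ h₂ => h.2 k h₁ (h₂.trans hz.2)⟩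

theorem IncRel.of_mem_Icc (h : IncRel lhd x y) (hz : z ∈ Icc x y) : IncRel lhd z y :=
  ⟨hz.2, fun k h₁ h₂ => h.2 k (hz.1.trans h₁) h₂⟩

theorem DecRel.trans [IsTrans P lhd] (hP : ∀ a b : P, IsChain (· ≤ ·) (Icc a b))
    (hxy : DecRel lhd x y) (hyz : DecRel lhd y z) : DecRel lhd x z := by
  refine ⟨hyz.le.trans hxy.le, fun k hzk hkx => ?_⟩
  rcases (hP z x).total ⟨hzk, hkx⟩ ⟨hyz.le, hxy.le⟩ with hky | hyk
  · exact hyz.2 k hzk hky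
  · exact trans_of lhd (hxy.2 k hyk hkx) (hyz.2 y hyz.le le_rfl)

end Intervals

theorem Nat.apply_add_one_mod {α : Type*} {s : ℕ} (f : ℕ → α) (hf : f s = f 0) (t : ℕ) :
    f ((t + 1) % s) = f (t % s + 1) := by
  rcases Nat.eq_zero_or_pos s with rfl | hs
  · simp
  rw [← Nat.mod_add_mod]
  rcases Nat.lt_or_eq_of_le (Nat.mod_lt t hs) with h | h
  · rw [Nat.mod_eq_of_lt h]
  · rw [show t % s + 1 = s from h, Nat.mod_self, hf]

theorem Nat.eq_add_one_mod_or_iff {n a b : ℕ} (ha : a < n) (hb : b < n) :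
    (b = (a + 1) % n ∨ b = (a + (n - 1)) % n) ↔
      b = a + 1 ∨ b + 1 = a ∨ a + 1 = n ∧ b = 0 ∨ a = 0 ∧ b + 1 = n := by
  have h₁ : (a + 1) % n = if a + 1 = n then 0 else a + 1 := by
    split_ifs with h
    · rw [h, Nat.mod_self]
    · exact Nat.mod_eq_of_lt (by omega)
  have h₂ : (a + (n - 1)) % n = if a = 0 then n - 1 else a - 1 := by
    split_ifs with h
    · rw [h, Nat.zero_add, Nat.mod_eq_of_lt (by omega)]
    · rw [show a + (n - 1) = a - 1 + n by omega, Nat.add_mod_right, Nat.mod_eq_of_lt (by omega)]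
  rw [h₁, h₂]
  split_ifs <;> omega

/-- `f` is an isomorphism from the crown `Z_n` onto its image: the even-indexed points are
minimal, each below exactly its two cyclic neighbours. -/
def IsCrownEmbedding {Q : Type*} [PartialOrder Q] (n : ℕ) (f : Fin n → Q) : Prop :=
  Function.Injective f ∧ ∀ a b : Fin n,
    (a = b ∨ (Even a.val ∧ (b.val = (a.val + 1) % n ∨ b.val = (a.val + (n - 1)) % n))) ↔ f a ≤ f b

theorem exists_isCrownEmbedding_of_seq {Q : Type*} [PartialOrder Q] {ρ : ℕ} (A B : ℕ → Q)
    (hA : ∀ i j, i < ρ → j < ρ → A i ≤ A j → i = j)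
    (hB : ∀ i j, i < ρ → j < ρ → B i ≤ B j → i = j)
    (hBA : ∀ i j, i < ρ → j < ρ → ¬ B i ≤ A j)
    (hAB : ∀ i j, i < ρ → j < ρ → (A i ≤ B j ↔ i = j ∨ i = j + 1 ∨ i = 0 ∧ j + 1 = ρ)) :
    ∃ f : Fin (2 * ρ) → Q, IsCrownEmbedding (2 * ρ) f := by
  classical
  let f : Fin (2 * ρ) → Q := fun a => if Even a.val then A (a.val / 2) else B (a.val / 2)
  have hf (a : Fin (2 * ρ)) : (∃ i < ρ, a.val = 2 * i ∧ f a = A i) ∨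
      (∃ i < ρ, a.val = 2 * i + 1 ∧ f a = B i) := by
    obtain ⟨i, hi | hi⟩ := Nat.even_or_odd' a.val
    · exact .inl ⟨i, by omega, hi, by simp [f, hi]⟩
    · refine .inr ⟨i, by omega, hi, ?_⟩
      simp only [f, hi, Nat.not_even_two_mul_add_one, if_false]
      congr 1
      omega
  have hle (a b : Fin (2 * ρ)) : f a ≤ f b → f b ≤ f a → a = b := by
    intro hab hba
    rcases hf a with ⟨i, hi, ha, hfa⟩ | ⟨i, hi, ha, hfa⟩ <;>
      rcases hf b with ⟨j, hj, hb, hfb⟩ | ⟨j, hj, hb, hfb⟩ <;> rw [hfa, hfb] at hab hba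
    · have := hA i j hi hj hab; ext; omega
    · exact absurd hba (hBA j i hj hi)
    · exact absurd hab (hBA i j hi hj)
    · have := hB i j hi hj hab; ext; omega
  refine ⟨f, fun a b h => hle a b h.le h.ge, fun a b => ?_⟩
  rw [Fin.ext_iff, Nat.eq_add_one_mod_or_iff a.isLt b.isLt]
  rcases hf a with ⟨i, hi, ha, hfa⟩ | ⟨i, hi, ha, hfa⟩ <;>
    rcases hf b with ⟨j, hj, hb, hfb⟩ | ⟨j, hj, hb, hfb⟩ <;> rw [hfa, hfb, ha, hb]
  · simp only [even_two_mul, true_and]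
    exact ⟨fun h => le_of_eq (congrArg A (by omega)), fun h => .inl (by rw [hA i j hi hj h])⟩
  · simp only [even_two_mul, true_and]
    rw [hAB i j hi hj]
    omega
  · simp only [Nat.not_even_two_mul_add_one, false_and, or_false]
    exact iff_of_false (by omega) (hBA i j hi hj)
  · simp only [Nat.not_even_two_mul_add_one, false_and, or_false]
    exact ⟨fun h => le_of_eq (congrArg B (by omega)), fun h => by rw [hB i j hi hj h]⟩

namespace AdaptedOrd

variable {P : Type*} [PartialOrder P] {ι : Type*} {r : ι → P → P → Prop} {x y z : P}

def DecAll (r : ι → P → P → Prop) (x y : P) : Prop := ∀ i, DecRel (r i) x y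

def IncAny (r : ι → P → P → Prop) (x y : P) : Prop := ∃ i, IncRel (r i) x y

theorem DecAll.le [Nonempty ι] (h : DecAll r x y) : y ≤ x := (h (Classical.arbitrary ι)).le

theorem DecAll.refl [∀ i, Std.Refl (r i)] (x : P) : DecAll r x x := fun _ => DecRel.refl x

theorem IncAny.le (h : IncAny r x y) : x ≤ y := h.choose_spec.le

theorem DecAll.of_mem_Icc (h : DecAll r x y) (hz : z ∈ Icc y x) : DecAll r z y :=
  fun i => (h i).of_mem_Icc hz

theorem IncAny.of_mem_Icc (h : IncAny r x y) (hz : z ∈ Icc x y) : IncAny r z y :=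
  h.imp fun _ hi => hi.of_mem_Icc hz

theorem DecAll.trans [Nonempty ι] [∀ i, IsTrans P (r i)] (hP : ∀ a b : P, IsChain (· ≤ ·) (Icc a b))
    (hxy : DecAll r x y) (hyz : DecAll r y z) : DecAll r x z :=
  fun i => (hxy i).trans hP (hyz i)

theorem le_of_reflTransGen_incAny (h : ReflTransGen (IncAny r) x y) : x ≤ y := by
  induction h with
  | refl => exact le_rfl
  | tail _ hyz ih => exact ih.trans hyz.le

theorem reflTransGen_incAny_of_mem_Icc (hP : ∀ a b : P, IsChain (· ≤ ·) (Icc a b))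
    (h : ReflTransGen (IncAny r) x y) (hz : z ∈ Icc x y) : ReflTransGen (IncAny r) z y := by
  induction h using ReflTransGen.head_induction_on with
  | refl => rw [le_antisymm hz.2 hz.1]
  | @head x c hxc hcy ih =>
    rcases (hP x _).total hz ⟨hxc.le, le_of_reflTransGen_incAny hcy⟩ with hzc | hcz
    · exact .head (hxc.of_mem_Icc ⟨hz.1, hzc⟩) hcy
    · exact ih ⟨hcz, hz.2⟩

theorem eq_of_reflTransGen_incAny_of_decAll [∀ i, Std.Antisymm (r i)]
    (h : ReflTransGen (IncAny r) x y) (hyx : DecAll r y x) : x = y := by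
  induction h using ReflTransGen.head_induction_on with
  | refl => rfl
  | @head x c hxc hcy ih =>
    obtain ⟨i, hi⟩ := hxc
    have hcx : c = x := antisymm ((hyx i).2 c hi.le (le_of_reflTransGen_incAny hcy)) hi.rel
    subst hcx
    exact ih hyx

theorem exists_reflTransGen_incAny_or_decAll [Finite P] [∀ i, IsTrans P (r i)]
    (hP : ∀ a b : P, IsChain (· ≤ ·) (Icc a b)) (had : ∀ i, AdaptedOrd (r i)) (hxy : x ≤ y) :
    ∃ k, ReflTransGen (IncAny r) x k ∧ (k = y ∨ k < y ∧ DecAll r y k) := by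
  induction x using WellFoundedGT.induction with
  | _ x ih =>
  by_cases hdec : DecAll r y x
  · rcases hxy.eq_or_lt with rfl | hlt
    · exact ⟨x, .refl, .inl rfl⟩
    · exact ⟨x, .refl, .inr ⟨hlt, hdec⟩⟩
  -- some order has its top of `[x, y]` strictly above `x`: climb there
  obtain ⟨i, hi⟩ : ∃ i, ¬ DecRel (r i) y x := not_forall.1 hdec
  obtain ⟨k, hk, htop⟩ := (had i).exists_top_Icc hP hxy
  have hxk : x < k := hk.1.lt_of_ne fun hxk => hi ⟨hxy, fun j h₁ h₂ => hxk ▸ htop j ⟨h₁, h₂⟩⟩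
  obtain ⟨k', hk', hres⟩ := ih k hxk hk.2
  exact ⟨k', .head ⟨i, hk.1, fun j h₁ h₂ => htop j ⟨h₁, h₂.trans hk.2⟩⟩ hk', hres⟩

/-- A walk along `DecAll r ∪ IncAny r` from `x` to `z` with exactly `n` strict descents. -/
inductive Walk (r : ι → P → P → Prop) : ℕ → P → P → Prop
  | refl (x : P) : Walk r 0 x x
  | up {n : ℕ} {x y z : P} : IncAny r x y → Walk r n y z → Walk r n x z
  | down {n : ℕ} {x y z : P} : DecAll r x y → y < x → Walk r n y z → Walk r (n + 1) x z

namespace Walk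

variable {m n : ℕ}

theorem trans (h₁ : Walk r m x y) (h₂ : Walk r n y z) : Walk r (m + n) x z := by
  induction h₁ with
  | refl => simpa using h₂
  | up h _ ih => exact .up h (ih h₂)
  | down h hlt _ ih => rw [Nat.add_right_comm]; exact .down h hlt (ih h₂)

theorem of_reflTransGen (h : ReflTransGen (IncAny r) x y) : Walk r 0 x y := by
  induction h using ReflTransGen.head_induction_on with
  | refl => exact .refl _
  | head h _ ih => exact .up h ih

theorem single (h : DecAll r x y) (hlt : y < x) : Walk r 1 x y := .down h hlt (.refl y)

theorem reflTransGen (h : Walk r 0 x y) : ReflTransGen (IncAny r) x y := by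
  generalize hn : 0 = n at h
  induction h with
  | refl => exact .refl
  | up h _ ih => exact .head h (ih hn)
  | down => omega

theorem le (h : Walk r 0 x y) : x ≤ y := le_of_reflTransGen_incAny h.reflTransGen

theorem exists_of_succ (h : Walk r (n + 1) x z) :
    ∃ p q, ReflTransGen (IncAny r) x p ∧ DecAll r p q ∧ q < p ∧ Walk r n q z := by
  generalize hm : n + 1 = m at h
  induction h with
  | refl => omega
  | up hxy _ ih =>
    obtain ⟨p, q, hp, hpq, hqp, hq⟩ := ih hm
    exact ⟨p, q, .head hxy hp, hpq, hqp, hq⟩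
  | down hxy hlt hy => exact ⟨_, _, .refl, hxy, hlt, Nat.succ_injective hm ▸ hy⟩

theorem exists_of_rel [Nonempty ι] (h : DecAll r x y ∨ IncAny r x y) : ∃ n, Walk r n x y := by
  rcases h with h | h
  · rcases h.le.eq_or_lt with rfl | hlt
    · exact ⟨0, .refl _⟩
    · exact ⟨1, .single h hlt⟩
  · exact ⟨0, .up h (.refl y)⟩

theorem exists_of_transGen [Nonempty ι]
    (h : TransGen (fun x y => DecAll r x y ∨ IncAny r x y) x y) : ∃ n, Walk r n x y := by
  induction h with
  | single h => exact exists_of_rel h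
  | tail _ hyz ih =>
    obtain ⟨n, hn⟩ := ih
    obtain ⟨m, hm⟩ := exists_of_rel hyz
    exact ⟨n + m, hn.trans hm⟩

theorem exists_segments {x z p y : P} (h : Walk r n x z) (hzp : ReflTransGen (IncAny r) z p)
    (hpy : DecAll r p y) (hyp : y < p) :
    ∃ v w : ℕ → P, v 0 = x ∧ v (n + 1) = y ∧ ∀ t ≤ n,
      ReflTransGen (IncAny r) (v t) (w t) ∧ DecAll r (w t) (v (t + 1)) ∧ v (t + 1) < w t := by
  induction n generalizing x with
  | zero =>
    refine ⟨fun t => if t = 0 then x else y, fun _ => p, rfl, rfl, fun t ht => ?_⟩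
    obtain rfl : t = 0 := by omega
    exact ⟨h.reflTransGen.trans hzp, hpy, hyp⟩
  | succ n ih =>
    obtain ⟨p', q', hxp', hpq', hqp', hq'⟩ := h.exists_of_succ
    obtain ⟨v, w, hv0, hvn, hseg⟩ := ih hq'
    refine ⟨fun t => if t = 0 then x else v (t - 1), fun t => if t = 0 then p' else w (t - 1),
      rfl, by simpa using hvn, fun t ht => ?_⟩
    rcases t with _ | t
    · simpa [hv0] using ⟨hxp', hpq', hqp'⟩
    · simpa using hseg t (by omega)

end Walk

/-- A closed walk with the least positive number `period` of descents, unrolled periodically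
into valleys `v t` and peaks `w t`. -/
structure MinimalCycle (r : ι → P → P → Prop) where
  period : ℕ
  two_le_period : 2 ≤ period
  v : ℕ → P
  w : ℕ → P
  v_add_period (t : ℕ) : v (t + period) = v t
  w_add_period (t : ℕ) : w (t + period) = w t
  ascent (t : ℕ) : ReflTransGen (IncAny r) (v t) (w t)
  descent (t : ℕ) : DecAll r (w t) (v (t + 1))
  lt (t : ℕ) : v (t + 1) < w t
  period_le {n : ℕ} {a : P} : Walk r n a a → 0 < n → period ≤ n

theorem MinimalCycle.nonempty [∀ i, Std.Antisymm (r i)] {n : ℕ} {a : P} (h : Walk r (n + 1) a a) :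
    Nonempty (MinimalCycle r) := by
  classical
  have hex : ∃ m a, Walk r (m + 1) a a := ⟨n, a, h⟩
  obtain ⟨b, hb⟩ := Nat.find_spec hex
  -- restart the cycle at the valley reached by its first descent
  obtain ⟨p, q, hbp, hpq, hqp, hqb⟩ := hb.exists_of_succ
  obtain ⟨v, w, hv0, hvm, hseg⟩ := hqb.exists_segments hbp hpq hqp
  set m := Nat.find hex
  have hper : v (m + 1) = v 0 := hvm.trans hv0.symm
  have hseg' (t : ℕ) := Nat.apply_add_one_mod v hper t ▸ hseg (t % (m + 1)) (by
    have := Nat.mod_lt t (show 0 < m + 1 by omega); omega)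
  refine ⟨{
    period := m + 1
    two_le_period := ?_
    v := fun t => v (t % (m + 1))
    w := fun t => w (t % (m + 1))
    v_add_period := by simp
    w_add_period := by simp
    ascent := fun t => (hseg' t).1
    descent := fun t => (hseg' t).2.1
    lt := fun t => (hseg' t).2.2
    period_le := ?_ }⟩
  · by_contra hm
    obtain ⟨hasc, hdesc, hlt⟩ := hseg 0 (by omega)
    rw [show m = 0 by omega] at hper
    rw [hper] at hdesc hlt
    exact hlt.ne (eq_of_reflTransGen_incAny_of_decAll hasc hdesc)
  · rintro (_ | k) c hc hk
    · omega
    · exact Nat.succ_le_succ (Nat.find_min' hex ⟨c, hc⟩)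

namespace MinimalCycle

variable (c : MinimalCycle r)

theorem false_of_walk {n : ℕ} {a : P} (h : Walk r n a a) (h₀ : 0 < n) (hn : n < c.period) :
    False :=
  (c.period_le h h₀).not_gt hn

theorem v_le_w (t : ℕ) : c.v t ≤ c.w t := le_of_reflTransGen_incAny (c.ascent t)

theorem walk_ascent (t : ℕ) : Walk r 0 (c.v t) (c.w t) := .of_reflTransGen (c.ascent t)

theorem walk_descent (t : ℕ) : Walk r 1 (c.w t) (c.v (t + 1)) := .single (c.descent t) (c.lt t)

theorem walk_arc (t : ℕ) : ∀ k, Walk r k (c.v t) (c.v (t + k))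
  | 0 => .refl _
  | k + 1 => (walk_arc t k).trans ((c.walk_ascent (t + k)).trans (c.walk_descent (t + k)))

theorem walk_arc_of_add_eq {t k u : ℕ} (h : t + k = u + c.period) :
    Walk r k (c.v t) (c.v u) := by
  simpa only [h, c.v_add_period] using c.walk_arc t k

theorem not_w_le_succ (hP : ∀ a b : P, IsChain (· ≤ ·) (Icc a b)) (x : ℕ) :
    ¬ c.w x ≤ c.w (x + 1) := by
  intro h
  have hw := reflTransGen_incAny_of_mem_Icc hP (c.ascent (x + 1)) ⟨(c.lt x).le, h⟩
  have hs := c.two_le_period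
  exact c.false_of_walk (((Walk.of_reflTransGen hw).trans (c.walk_descent (x + 1))).trans
    ((c.walk_arc_of_add_eq (show x + 1 + 1 + (c.period - 2) = x + c.period by omega)).trans
      (c.walk_ascent x))) (by omega) (by omega)

/-- A comparability between a valley and a peak that are not adjacent in the cycle; `ρ` is the
number of valleys it spans. -/
def HasChord (ρ : ℕ) : Prop :=
  2 ≤ ρ ∧ ((∃ x, c.v (x + ρ) ≤ c.w x) ∨ ∃ x, c.v x ≤ c.w (x + (ρ - 1)))

theorem hasChord_period : c.HasChord c.period :=
  ⟨c.two_le_period, .inl ⟨0, by rw [c.v_add_period]; exact c.v_le_w 0⟩⟩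

section

variable [Nonempty ι] [∀ i, IsTrans P (r i)]

theorem not_decAll_v_succ (hP : ∀ a b : P, IsChain (· ≤ ·) (Icc a b)) (x : ℕ) :
    ¬ DecAll r (c.v x) (c.v (x + 1)) := by
  intro h
  obtain ⟨s, hs⟩ : ∃ s, c.period = s + 2 := ⟨c.period - 2, by have := c.two_le_period; omega⟩
  have hy : c.v (x + 1 + s + 1) = c.v x := by
    rw [show x + 1 + s + 1 = x + c.period by omega, c.v_add_period]
  -- compose with the descent into `v x` from the peak before it
  have hd : DecAll r (c.w (x + 1 + s)) (c.v (x + 1)) := (hy ▸ c.descent (x + 1 + s)).trans hP h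
  rcases hd.le.lt_or_eq with hlt | heq
  · exact c.false_of_walk
      ((c.walk_arc (x + 1) s).trans ((c.walk_ascent _).trans (.single hd hlt))) (by omega)
      (by omega)
  · have := c.lt (x + 1 + s)
    rw [hy, ← heq] at this
    exact h.le.not_gt this

theorem v_ne_w (hP : ∀ a b : P, IsChain (· ≤ ·) (Icc a b)) (t : ℕ) : c.v t ≠ c.w t :=
  fun h => c.not_decAll_v_succ hP t (h ▸ c.descent t)

theorem v_add_ne_w (hP : ∀ a b : P, IsChain (· ≤ ·) (Icc a b)) (x : ℕ) {a : ℕ}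
    (ha : a ≤ c.period) : c.v (x + a) ≠ c.w x := by
  intro h
  rcases Nat.eq_zero_or_pos a with rfl | ha₀
  · exact c.v_ne_w hP x h
  rcases ha.lt_or_eq with ha' | rfl
  · have hw := (c.walk_arc_of_add_eq (show x + a + (c.period - a) = x + c.period by omega)).trans
      (c.walk_ascent x)
    rw [← h] at hw
    exact c.false_of_walk hw (by omega) (by omega)
  · exact c.v_ne_w hP x (by rwa [c.v_add_period] at h)

theorem not_decAll_w_v (hP : ∀ a b : P, IsChain (· ≤ ·) (Icc a b)) (t : ℕ) :
    ¬ DecAll r (c.w t) (c.v t) := by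
  intro h
  rcases h.le.lt_or_eq with hlt | heq
  · exact c.false_of_walk ((c.walk_ascent t).trans (.single h hlt)) (by omega)
      (by have := c.two_le_period; omega)
  · exact c.v_ne_w hP t heq

theorem not_w_succ_le (hP : ∀ a b : P, IsChain (· ≤ ·) (Icc a b)) (x : ℕ) :
    ¬ c.w (x + 1) ≤ c.w x :=
  fun h => c.not_decAll_w_v hP (x + 1) ((c.descent x).of_mem_Icc ⟨c.v_le_w (x + 1), h⟩)

variable [Finite P]

theorem not_v_succ_le (hP : ∀ a b : P, IsChain (· ≤ ·) (Icc a b)) (had : ∀ i, AdaptedOrd (r i))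
    (x : ℕ) : ¬ c.v (x + 1) ≤ c.v x := by
  intro h
  have hs := c.two_le_period
  obtain ⟨k, hk, rfl | ⟨hkx, hdk⟩⟩ := exists_reflTransGen_incAny_or_decAll hP had h
  · exact c.false_of_walk ((Walk.of_reflTransGen hk).trans ((c.walk_ascent x).trans
      (c.walk_descent x))) (by omega) (by omega)
  rcases (le_of_reflTransGen_incAny hk).lt_or_eq with hlt | rfl
  · have hd := (c.descent x).of_mem_Icc ⟨hlt.le, hkx.le.trans (c.v_le_w x)⟩
    exact c.false_of_walk ((Walk.of_reflTransGen hk).trans (.single hd hlt)) (by omega)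
      (by omega)
  · exact c.not_decAll_v_succ hP x hdk

theorem not_v_le_succ (hP : ∀ a b : P, IsChain (· ≤ ·) (Icc a b)) (had : ∀ i, AdaptedOrd (r i))
    (x : ℕ) : ¬ c.v x ≤ c.v (x + 1) := by
  intro h
  rcases c.two_le_period.eq_or_lt with hs | hs
  · -- for period 2, `v (x + 2) = v x`, so the descent from `w (x + 1)` truncates at `v (x + 1)`
    have hv : c.v (x + 1 + 1) = c.v x := by
      rw [show x + 1 + 1 = x + c.period by omega, c.v_add_period]
    exact c.not_decAll_v_succ hP (x + 1)
      ((c.descent (x + 1)).of_mem_Icc ⟨hv ▸ h, c.v_le_w (x + 1)⟩)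
  obtain ⟨k, hk, rfl | ⟨hkx, hdk⟩⟩ := exists_reflTransGen_incAny_or_decAll hP had h
  · exact c.false_of_walk ((Walk.of_reflTransGen hk).trans
      (c.walk_arc_of_add_eq (show x + 1 + (c.period - 1) = x + c.period by omega))) (by omega)
      (by omega)
  · have hkw := reflTransGen_incAny_of_mem_Icc hP (c.ascent x)
      ⟨le_of_reflTransGen_incAny hk, hkx.le.trans (c.lt x).le⟩
    exact c.false_of_walk (((Walk.of_reflTransGen hkw).trans (c.walk_descent x)).trans
      (.single hdk hkx)) (by omega) (by omega)

end

variable {c} {ρ : ℕ}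

theorem eq_or_eq_succ_of_v_le_w (hρ : ∀ k < ρ, ¬ c.HasChord k) {x p q : ℕ}
    (h : c.v (x + p) ≤ c.w (x + q)) (h₁ : p < q + ρ) (h₂ : q + 1 < p + ρ) : p = q ∨ p = q + 1 := by
  by_contra hne
  rcases lt_or_gt_of_ne (show p ≠ q by omega) with hpq | hpq
  · refine hρ (q - p + 1) (by omega) ⟨by omega, .inr ⟨x + p, ?_⟩⟩
    rwa [show x + p + (q - p + 1 - 1) = x + q by omega]
  · refine hρ (p - q) (by omega) ⟨by omega, .inl ⟨x + q, ?_⟩⟩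
    rwa [show x + q + (p - q) = x + p by omega]

section

variable [Nonempty ι] [∀ i, IsTrans P (r i)]

theorem eq_of_w_le_w (hP : ∀ a b : P, IsChain (· ≤ ·) (Icc a b)) (hρ : ∀ k < ρ, ¬ c.HasChord k)
    {x p q : ℕ} (h : c.w (x + p) ≤ c.w (x + q)) (h₁ : p < q + ρ) (h₂ : q < p + ρ) : p = q := by
  rcases lt_trichotomy p q with hpq | rfl | hpq
  · have hv : c.v (x + (p + 1)) ≤ c.w (x + q) := (c.lt (x + p)).le.trans h
    obtain rfl : q = p + 1 := by
      have := c.eq_or_eq_succ_of_v_le_w hρ hv (by omega) (by omega); omega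
    exact absurd h (c.not_w_le_succ hP (x + p))
  · rfl
  · obtain rfl : p = q + 1 := by
      have := c.eq_or_eq_succ_of_v_le_w hρ ((c.v_le_w _).trans h) h₁ (by omega); omega
    exact absurd h (c.not_w_succ_le hP (x + q))

variable [Finite P]

theorem eq_of_v_le_v (hP : ∀ a b : P, IsChain (· ≤ ·) (Icc a b)) (had : ∀ i, AdaptedOrd (r i))
    (hρ : ∀ k < ρ, ¬ c.HasChord k) {x p q : ℕ} (h : c.v (x + p) ≤ c.v (x + q)) (h₁ : p < q + ρ)
    (h₂ : q < p + ρ) : p = q := by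
  rcases lt_trichotomy p q with hpq | rfl | hpq
  · rw [show x + q = x + (q - 1) + 1 by omega] at h
    obtain rfl : p = q - 1 := by
      have := c.eq_or_eq_succ_of_v_le_w hρ (h.trans (c.lt _).le) (by omega) (by omega); omega
    exact absurd h (c.not_v_le_succ hP had _)
  · rfl
  · obtain rfl : p = q + 1 := by
      have := c.eq_or_eq_succ_of_v_le_w hρ (h.trans (c.v_le_w _)) h₁ (by omega); omega
    exact absurd h (c.not_v_succ_le hP had (x + q))

theorem not_w_le_v (hP : ∀ a b : P, IsChain (· ≤ ·) (Icc a b)) (had : ∀ i, AdaptedOrd (r i))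
    (hρ : ∀ k < ρ, ¬ c.HasChord k) {x p q : ℕ} (h : c.w (x + p) ≤ c.v (x + q)) (h₁ : p < q + ρ)
    (h₂ : q < p + ρ) : False := by
  obtain rfl := c.eq_of_v_le_v hP had hρ ((c.v_le_w _).trans h) h₁ h₂
  exact c.v_ne_w hP _ (le_antisymm (c.v_le_w _) h)

theorem exists_isCrownEmbedding_of_v_le_w (hP : ∀ a b : P, IsChain (· ≤ ·) (Icc a b))
    (had : ∀ i, AdaptedOrd (r i)) (hρ : ∀ k < ρ, ¬ c.HasChord k) {x : ℕ}
    (hx : c.v x ≤ c.w (x + (ρ - 1))) : ∃ f : Fin (2 * ρ) → P, IsCrownEmbedding (2 * ρ) f := by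
  refine exists_isCrownEmbedding_of_seq (fun i => c.v (x + i)) (fun i => c.w (x + i))
    (fun i j hi hj h => c.eq_of_v_le_v hP had hρ h (by omega) (by omega))
    (fun i j hi hj h => c.eq_of_w_le_w hP hρ h (by omega) (by omega))
    (fun i j hi hj h => c.not_w_le_v hP had hρ h (by omega) (by omega))
    (fun i j hi hj => ⟨fun h => ?_, ?_⟩)
  · by_cases hij : i = 0 ∧ j + 1 = ρ
    · exact .inr (.inr hij)
    · exact (c.eq_or_eq_succ_of_v_le_w hρ h (by omega) (by omega)).imp_right .inl
  · rintro (rfl | rfl | ⟨rfl, rfl⟩)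
    · exact c.v_le_w _
    · exact (c.lt _).le
    · simpa using hx

theorem exists_isCrownEmbedding_of_v_add_le_w (hP : ∀ a b : P, IsChain (· ≤ ·) (Icc a b))
    (had : ∀ i, AdaptedOrd (r i)) (hρ : ∀ k < ρ, ¬ c.HasChord k) (hρs : ρ ≤ c.period) {x : ℕ}
    (hx : c.v (x + ρ) ≤ c.w x) : ∃ f : Fin (2 * ρ) → P, IsCrownEmbedding (2 * ρ) f := by
  -- read the window backwards, so that the chord `v (x + ρ) ≤ w x` closes the crown at index `0`
  refine exists_isCrownEmbedding_of_seq (fun i => c.v (x + (ρ - i)))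
    (fun i => c.w (x + (ρ - 1 - i)))
    (fun i j hi hj h => ?_) (fun i j hi hj h => ?_) (fun i j hi hj h => ?_)
    (fun i j hi hj => ⟨fun h => ?_, ?_⟩)
  · have := c.eq_of_v_le_v hP had hρ h (by omega) (by omega); omega
  · have := c.eq_of_w_le_w hP hρ h (by omega) (by omega); omega
  · by_cases hij : i = ρ - 1 ∧ j = 0
    · obtain ⟨rfl, rfl⟩ := hij
      refine c.v_add_ne_w hP x hρs (le_antisymm hx ?_)
      simpa using h
    · exact c.not_w_le_v hP had hρ h (by omega) (by omega)
  · by_cases hij : i = 0 ∧ j + 1 = ρ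
    · exact .inr (.inr hij)
    · have := c.eq_or_eq_succ_of_v_le_w hρ h (by omega) (by omega); omega
  · rintro (rfl | rfl | ⟨rfl, hj⟩)
    · simpa only [show x + (ρ - i) = x + (ρ - 1 - i) + 1 by omega] using (c.lt _).le
    · simpa only [show ρ - (j + 1) = ρ - 1 - j by omega] using c.v_le_w _
    · simpa [show ρ - 1 - j = 0 by omega] using hx

end

theorem exists_isCrownEmbedding [Nonempty ι] [∀ i, IsTrans P (r i)] [Finite P]
    (c : MinimalCycle r) (hP : ∀ a b : P, IsChain (· ≤ ·) (Icc a b))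
    (had : ∀ i, AdaptedOrd (r i)) :
    ∃ n, 4 ≤ n ∧ Even n ∧ ∃ f : Fin n → P, IsCrownEmbedding n f := by
  classical
  have hex : ∃ ρ, c.HasChord ρ := ⟨_, c.hasChord_period⟩
  obtain ⟨hρ₂, hx | hx⟩ := Nat.find_spec hex
  all_goals refine ⟨2 * Nat.find hex, by omega, even_two_mul _, ?_⟩
  · exact exists_isCrownEmbedding_of_v_add_le_w hP had (fun _ => Nat.find_min hex)
      (Nat.find_min' hex c.hasChord_period) hx.choose_spec
  · exact exists_isCrownEmbedding_of_v_le_w hP had (fun _ => Nat.find_min hex) hx.choose_spec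

end MinimalCycle

theorem isPartialOrder_transGen [Finite P] [Nonempty ι] [∀ i, IsPartialOrder P (r i)]
    (hP : ∀ a b : P, IsChain (· ≤ ·) (Icc a b))
    (hZ : ∀ n, 4 ≤ n → Even n → ¬ ∃ f : Fin n → P, IsCrownEmbedding n f)
    (had : ∀ i, AdaptedOrd (r i)) :
    IsPartialOrder P (TransGen fun x y => DecAll r x y ∨ IncAny r x y) where
  refl x := .single (.inl (DecAll.refl x))
  trans _ _ _ := TransGen.trans
  antisymm x y hxy hyx := by
    obtain ⟨m, hm⟩ := Walk.exists_of_transGen hxy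
    obtain ⟨n, hn⟩ := Walk.exists_of_transGen hyx
    rcases Nat.eq_zero_or_pos (m + n) with h | h
    · obtain ⟨rfl, rfl⟩ : m = 0 ∧ n = 0 := by omega
      exact le_antisymm hm.le hn.le
    · obtain ⟨k, hk⟩ : ∃ k, m + n = k + 1 := ⟨m + n - 1, by omega⟩
      obtain ⟨c⟩ := MinimalCycle.nonempty (hk ▸ hm.trans hn)
      obtain ⟨l, hl, hle, hf⟩ := c.exists_isCrownEmbedding hP had
      exact (hZ l hl hle hf).elim

end AdaptedOrd

/-- for a finite diamond-free poset with no full subposet isomorphic to a crown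
`Z_n` (even `n ≥ 4`), and adapted orders `⊲₁, ⊲₂`, the transitive closure of
`(Dec(⊲₁) ∩ Dec(⊲₂)) ∪ Inc(⊲₁) ∪ Inc(⊲₂)` is a partial order. -/
theorem transGen_meet_rel_isPartialOrder
    {P : Type*} [PartialOrder P] [Finite P]
    (hdf : ¬ ∃ a b c d : P, a ≤ b ∧ b ≤ d ∧ a ≤ c ∧ c ≤ d ∧ ¬ b ≤ c ∧ ¬ c ≤ b)
    (hZ : ∀ n : ℕ, 4 ≤ n → Even n →
      ¬ ∃ f : Fin n → P, Function.Injective f ∧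
        ∀ a b : Fin n,
          (a = b ∨ (Even a.val ∧ (b.val = (a.val + 1) % n ∨ b.val = (a.val + (n - 1)) % n)))
            ↔ f a ≤ f b)
    (lhd₁ lhd₂ : P → P → Prop)
    (hpo₁ : IsPartialOrder P lhd₁) (hpo₂ : IsPartialOrder P lhd₂)
    (had₁ : AdaptedOrd lhd₁) (had₂ : AdaptedOrd lhd₂) :
    IsPartialOrder P (Relation.TransGen
      (fun x y => (DecRel lhd₁ x y ∧ DecRel lhd₂ x y) ∨ IncRel lhd₁ x y ∨ IncRel lhd₂ x y)) := by
  have hP (a d : P) : IsChain (· ≤ ·) (Icc a d) := fun b hb c hc _ =>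
    by_contra fun h => hdf ⟨a, b, c, d, hb.1, hb.2, hc.1, hc.2, not_or.1 h⟩
  let r (b : Bool) : P → P → Prop := cond b lhd₁ lhd₂
  have : ∀ b, IsPartialOrder P (r b) := fun b => b.casesOn hpo₂ hpo₁
  have hrel : (fun x y => (DecRel lhd₁ x y ∧ DecRel lhd₂ x y) ∨ IncRel lhd₁ x y ∨ IncRel lhd₂ x y)
      = fun x y => AdaptedOrd.DecAll r x y ∨ AdaptedOrd.IncAny r x y := by
    ext x y
    simp only [AdaptedOrd.DecAll, AdaptedOrd.IncAny, Bool.forall_bool, Bool.exists_bool, r,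
      cond_true, cond_false]
    tauto
  rw [hrel]
  exact AdaptedOrd.isPartialOrder_transGen hP hZ fun b => b.casesOn had₂ had₁
end
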